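/- arXiv:2001.01472 — 2 statements merged into one kernel-verified Lean document; each statement's English description precedes it below -/
import Mathlib

section
/- Let p₁,…,p₆ be 6 points in ℝ³ such that no 4 of them lie in a common affine plane. Then the 6 points can be partitioned into two triples {a,b,c} and {d,e,f} such that the relative interior of the triangle with vertices a,b,c intersects the boundary of the triangle with vertices d,e,f (the union of the segments [d,e], [e,f], [f,d]) in exactly one point. -/
open Set

noncomputable section

/-- Points of `ℝ³`. -/
abbrev V3 := Fin 3 → ℝ

/-- The boundary of the triangle with vertices `a b c`:
the union of the segments `[a,b]`, `[b,c]`, `[c,a]`. -/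
def triBoundary (a b c : V3) : Set V3 :=
  segment ℝ a b ∪ segment ℝ b c ∪ segment ℝ c a

/-- The relative interior of the triangle with vertices `a b c`: convex combinations
`α•a + β•b + γ•c` with `α, β, γ > 0` and `α + β + γ = 1`. -/
def triRelint (a b c : V3) : Set V3 :=
  {x | ∃ α β γ : ℝ, 0 < α ∧ 0 < β ∧ 0 < γ ∧ α + β + γ = 1 ∧ x = α • a + β • b + γ • c}

/-!
The affine dependencies `ν` of the six points (`∑ ν i = 0`, `∑ ν i • p i = 0`) form a plane, and
by general position a nonzero one vanishes at most once. A point of the open triangle `abc` on the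
edge `[d, e]` is the same as a dependency vanishing at `f` that is positive on `a, b, c` and
nonpositive on `d, e`. As the dependencies vanishing at `f` form a line, such a point is unique,
and which edges of `def` cross `abc` is decided by sign patterns alone.

With a basis `u, v` of the dependencies, the one vanishing at `z` is `u z • v - v z • u`, whose
sign at `i` is that of the determinant of the Gale vectors `(u z, v z)` and `(u i, v i)`. Once the
lines they span are sorted by angle, every such sign is determined by the order and by the side of
the `x`-axis on which each vector lies, a vector `ε : Fin 6 → Bool`; a finite check over all `ε`
then produces the partition.
-/

open Finset Module

def affineDeps {ι E : Type*} [Fintype ι] [AddCommGroup E] [Module ℝ E] (q : ι → E) :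
    Submodule ℝ (ι → ℝ) :=
  LinearMap.ker (Fintype.linearCombination ℝ fun i => ((1 : ℝ), q i))

def NoFourCoplanar {ι E : Type*} [AddCommGroup E] [Module ℝ E] (q : ι → E) : Prop :=
  ∀ s : Finset ι, s.card = 4 → ¬ Coplanar ℝ (q '' ↑s)

section AffineDeps

variable {ι E : Type*} [Fintype ι] [AddCommGroup E] [Module ℝ E] {q : ι → E} {ν : ι → ℝ}

theorem mem_affineDeps : ν ∈ affineDeps q ↔ ∑ i, ν i = 0 ∧ ∑ i, ν i • q i = 0 := by
  simp [affineDeps, Fintype.linearCombination_apply, Prod.ext_iff, Prod.fst_sum, Prod.snd_sum]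

theorem comp_mem_affineDeps (σ : Equiv.Perm ι) (hν : ν ∈ affineDeps q) :
    ν ∘ σ ∈ affineDeps (q ∘ σ) := by
  rw [mem_affineDeps] at hν ⊢
  simpa only [Function.comp_apply, Equiv.sum_comp σ (fun i => ν i),
    Equiv.sum_comp σ (fun i => ν i • q i)] using hν

theorem eq_zero_of_mem_affineDeps {s : Finset ι} (hs : AffineIndependent ℝ fun i : s => q i)
    (hν : ν ∈ affineDeps q) (hνs : ∀ i ∉ s, ν i = 0) : ν = 0 := by
  classical
  obtain ⟨hsum, hcomb⟩ := mem_affineDeps.1 hν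
  have hs_sum : ∑ i ∈ s, ν i = 0 := by
    rwa [Finset.sum_subset (Finset.subset_univ s) fun i _ hi => hνs i hi]
  have hs_comb : ∑ i ∈ s, ν i • q i = 0 := by
    rwa [Finset.sum_subset (Finset.subset_univ s) fun i _ hi => by rw [hνs i hi, zero_smul]]
  rw [← Finset.sum_coe_sort] at hs_sum hs_comb
  funext i
  by_cases hi : i ∈ s
  · exact hs.eq_zero_of_sum_eq_zero hs_sum hs_comb ⟨i, hi⟩ (Finset.mem_univ _)
  · exact hνs i hi

theorem exists_mem_affineDeps_apply_eq_zero [FiniteDimensional ℝ E]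
    (h : finrank ℝ E + 2 < Fintype.card ι) (z : ι) :
    ∃ ν ∈ affineDeps q, ν ≠ 0 ∧ ν z = 0 := by
  have hdim : finrank ℝ ((ℝ × E) × ℝ) < finrank ℝ (ι → ℝ) := by
    simp only [finrank_prod, finrank_self, Module.finrank_fintype_fun_eq_card]
    omega
  obtain ⟨ν, hν, hν0⟩ := Submodule.exists_mem_ne_zero_of_ne_bot <|
    LinearMap.ker_ne_bot_of_finrank_lt
      (f := (Fintype.linearCombination ℝ fun i => ((1 : ℝ), q i)).prod (LinearMap.proj z)) hdim
  rw [LinearMap.ker_prod] at hν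
  exact ⟨ν, hν.1, hν0, hν.2⟩

end AffineDeps

section NoFourCoplanar

variable {ι E : Type*} [AddCommGroup E] [Module ℝ E]

theorem NoFourCoplanar.affineIndependent {q : ι → E} (hq : NoFourCoplanar q) {s : Finset ι}
    (hs : s.card = 4) : AffineIndependent ℝ fun i : s => q i := by
  rw [affineIndependent_iff_not_finrank_vectorSpan_le ℝ _ (by simp [hs] : Fintype.card s = 2 + 2)]
  intro hle
  have := finiteDimensional_vectorSpan_of_finite ℝ (s.finite_toSet.image q)
  refine hq s hs (coplanar_iff_finrank_le_two.2 ?_)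
  rwa [Set.image_eq_range]

theorem NoFourCoplanar.comp_perm {q : ι → E} (hq : NoFourCoplanar q) (σ : Equiv.Perm ι) :
    NoFourCoplanar (q ∘ σ) := by
  intro s hs
  have := hq (s.map σ.toEmbedding) (by rwa [card_map])
  rwa [coe_map, Equiv.coe_toEmbedding, ← Set.image_comp] at this

variable {q : Fin 6 → E} {ν g : Fin 6 → ℝ}

theorem NoFourCoplanar.eq_zero_of_apply_eq_zero (hq : NoFourCoplanar q) (hν : ν ∈ affineDeps q)
    {a b : Fin 6} (hab : a ≠ b) (ha : ν a = 0) (hb : ν b = 0) : ν = 0 := by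
  refine eq_zero_of_mem_affineDeps (hq.affineIndependent (s := {a, b}ᶜ) ?_) hν fun i hi => ?_
  · rw [card_compl, card_pair hab]; rfl
  · rw [notMem_compl, Finset.mem_insert, Finset.mem_singleton] at hi
    rcases hi with rfl | rfl <;> assumption

theorem NoFourCoplanar.apply_ne_zero (hq : NoFourCoplanar q) (hg : g ∈ affineDeps q) (hg0 : g ≠ 0)
    {i k : Fin 6} (hik : i ≠ k) (hgk : g k = 0) : g i ≠ 0 :=
  fun hgi => hg0 (hq.eq_zero_of_apply_eq_zero hg hik hgi hgk)

theorem NoFourCoplanar.eq_smul (hq : NoFourCoplanar q) (hν : ν ∈ affineDeps q)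
    (hg : g ∈ affineDeps q) {i k : Fin 6} (hik : i ≠ k) (hνk : ν k = 0) (hgk : g k = 0)
    (hgi : g i ≠ 0) : ν = (ν i / g i) • g :=
  sub_eq_zero.1 <| hq.eq_zero_of_apply_eq_zero (sub_mem hν (Submodule.smul_mem _ _ hg)) hik
    (by simp [div_mul_cancel₀ _ hgi]) (by simp [hνk, hgk])

end NoFourCoplanar

section Gale

variable {ι : Type*} (u v : ι → ℝ)

def galeDep (z : ι) : ι → ℝ := u z • v - v z • u

theorem galeDep_apply (a b : ι) : galeDep u v a b = u a * v b - v a * u b := rfl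

theorem galeDep_self (z : ι) : galeDep u v z z = 0 := by
  rw [galeDep_apply, mul_comm, sub_self]

theorem galeDep_swap (a b : ι) : galeDep u v b a = -galeDep u v a b := by
  simp only [galeDep_apply]; ring

variable {u v} {E : Type*} [AddCommGroup E] [Module ℝ E]

theorem galeDep_mem [Fintype ι] {q : ι → E} (hu : u ∈ affineDeps q) (hv : v ∈ affineDeps q)
    (z : ι) : galeDep u v z ∈ affineDeps q :=
  sub_mem (Submodule.smul_mem _ _ hv) (Submodule.smul_mem _ _ hu)

theorem exists_galeDep_pos [Fintype ι] [Nontrivial ι] {q : ι → E} (hu : u ∈ affineDeps q)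
    (hv : v ∈ affineDeps q) (hne : ∀ z i, i ≠ z → galeDep u v z i ≠ 0) (z : ι) :
    ∃ i j, 0 < galeDep u v z i ∧ 0 < galeDep u v j z := by
  have hsum := (mem_affineDeps.1 (galeDep_mem hu hv z)).1
  obtain ⟨k, hk⟩ := exists_ne z
  obtain ⟨i, -, hi⟩ := exists_pos_of_sum_zero_of_exists_nonzero _ hsum
    ⟨k, mem_univ _, hne z k hk⟩
  obtain ⟨j, -, hj⟩ := exists_pos_of_sum_zero_of_exists_nonzero (fun j => -galeDep u v z j)
    (by rw [sum_neg_distrib, hsum, neg_zero]) ⟨k, mem_univ _, neg_ne_zero.2 (hne z k hk)⟩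
  exact ⟨i, j, hi, by rwa [galeDep_swap]⟩

/-- Two dependencies with zeros at distinct places span all of them, so no `galeDep u v z`
vanishes identically. -/
theorem NoFourCoplanar.galeDep_apply_ne_zero {q : Fin 6 → E} (hq : NoFourCoplanar q)
    {u v : Fin 6 → ℝ} (hu : u ∈ affineDeps q) (hv : v ∈ affineDeps q) (hu0 : u ≠ 0) (hv0 : v ≠ 0)
    {a b : Fin 6} (hab : a ≠ b) (hua : u a = 0) (hvb : v b = 0) {z i : Fin 6} (hiz : i ≠ z) :
    galeDep u v z i ≠ 0 := by
  intro h
  have hz : galeDep u v z = 0 :=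
    hq.eq_zero_of_apply_eq_zero (galeDep_mem hu hv z) hiz h (galeDep_self u v z)
  suffices v a = 0 from hv0 (hq.eq_zero_of_apply_eq_zero hv hab this hvb)
  have hza := congrFun hz a
  rw [galeDep_apply, hua, mul_zero, sub_zero, Pi.zero_apply, mul_eq_zero] at hza
  rcases hza with huz | hva
  · obtain rfl : z = a := by_contra fun hza => hu0 (hq.eq_zero_of_apply_eq_zero hu hza huz hua)
    have : v z • u = 0 := by simpa [galeDep, huz] using hz
    exact (smul_eq_zero.1 this).resolve_right hu0
  · exact hva

end Gale

section Sorting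

variable {R : Type*} [Ring R] [LinearOrder R] [IsStrictOrderedRing R]

theorem mul_pos_iff_decide_eq {a b : R} (ha : a ≠ 0) (hb : b ≠ 0) :
    0 < a * b ↔ decide (0 < a) = decide (0 < b) := by
  rw [decide_eq_decide, mul_pos_iff]
  rcases ha.lt_or_gt with ha | ha <;> rcases hb.lt_or_gt with hb | hb <;>
    simp [ha, hb, ha.not_gt, hb.not_gt]

theorem mul_neg_iff_decide_ne {a b : R} (ha : a ≠ 0) (hb : b ≠ 0) :
    a * b < 0 ↔ decide (0 < a) ≠ decide (0 < b) := by
  rw [ne_eq, ← mul_pos_iff_decide_eq ha hb, not_lt, le_iff_lt_or_eq,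
    or_iff_left (mul_ne_zero ha hb)]

/-- Orders the lines `ℝ (x, y)` by their angle with the `x`-axis. -/
def slopeKey (x y : ℝ) : WithBot ℝ := if y = 0 then ⊥ else ↑(-(x / y))

def upperHalf (x y : ℝ) : Bool := decide (0 < y ∨ y = 0 ∧ 0 < x)

theorem det_eq_zero_of_slopeKey_eq {x y x' y' : ℝ} (h : slopeKey x y = slopeKey x' y') :
    x * y' - y * x' = 0 := by
  unfold slopeKey at h
  by_cases hy : y = 0 <;> by_cases hy' : y' = 0 <;> simp only [hy, hy', if_true, if_false] at h
  · simp [hy, hy']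
  · exact absurd h.symm WithBot.coe_ne_bot
  · exact absurd h WithBot.coe_ne_bot
  · rw [WithBot.coe_inj, neg_inj, div_eq_div_iff hy hy'] at h
    linarith

theorem det_pos_iff_of_slopeKey_lt {x y x' y' : ℝ} (hdet : x * y' - y * x' ≠ 0)
    (h : slopeKey x y < slopeKey x' y') :
    0 < x * y' - y * x' ↔ upperHalf x y = upperHalf x' y' := by
  have hy' : y' ≠ 0 := by
    rintro rfl
    simp [slopeKey] at h
  have hup' : upperHalf x' y' = decide (0 < y') := by simp [upperHalf, hy']
  rw [hup']
  by_cases hy : y = 0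
  · subst hy
    have hx : x ≠ 0 := by rintro rfl; simp at hdet
    rw [zero_mul, sub_zero, mul_pos_iff_decide_eq hx hy']
    simp [upperHalf]
  · have hup : upperHalf x y = decide (0 < y) := by simp [upperHalf, hy]
    simp only [slopeKey, hy, hy', if_false, WithBot.coe_lt_coe, neg_lt_neg_iff] at h
    have hdiv : 0 < x / y - x' / y' := sub_pos.2 h
    have hprod : x * y' - y * x' = y * y' * (x / y - x' / y') := by field_simp
    rw [hup, hprod, mul_pos_iff_of_pos_right hdiv, mul_pos_iff_decide_eq hy hy']

def galeSign {n : ℕ} (ε : Fin n → Bool) (a b : Fin n) : Bool :=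
  if a < b then ε a == ε b else ε a != ε b

/-- `ρ` sorts the lines `ℝ (u i, v i)` by angle and `ε` records on which side of the `x`-axis each
vector lies. -/
theorem exists_perm_decide_galeDep_pos {n : ℕ} {u v : Fin n → ℝ}
    (hne : ∀ z i, i ≠ z → galeDep u v z i ≠ 0) :
    ∃ (ρ : Equiv.Perm (Fin n)) (ε : Fin n → Bool),
      ∀ a b, decide (0 < galeDep u v (ρ a) (ρ b)) = galeSign ε a b := by
  let key i := slopeKey (u i) (v i)
  have hkey : Function.Injective key := fun a b hab =>
    by_contra fun hba => hne a b (Ne.symm hba) (det_eq_zero_of_slopeKey_eq hab)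
  let ρ := Tuple.sort key
  have hmono : StrictMono (key ∘ ρ) :=
    (Tuple.monotone_sort key).strictMono_of_injective (hkey.comp ρ.injective)
  let ε a := upperHalf (u (ρ a)) (v (ρ a))
  have hlt : ∀ {a b}, a < b → (0 < galeDep u v (ρ a) (ρ b) ↔ ε a = ε b) := fun {a b} hab =>
    det_pos_iff_of_slopeKey_lt (hne _ _ (ρ.injective.ne hab.ne')) (hmono hab)
  refine ⟨ρ, ε, fun a b => ?_⟩
  rcases lt_trichotomy a b with hab | rfl | hab
  · simp [galeSign, hab, hlt hab, Bool.beq_eq_decide_eq]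
  · simp [galeSign, galeDep_self]
  · have hd := hne _ _ (ρ.injective.ne hab.ne')
    have hgt : 0 < galeDep u v (ρ a) (ρ b) ↔ ε a ≠ ε b := by
      rw [galeDep_swap u v (ρ b), neg_pos, ← not_le, le_iff_lt_or_eq, or_iff_left hd.symm,
        hlt hab, eq_comm]
    rw [Bool.eq_iff_iff]
    simp [galeSign, hab.not_gt, hgt]

end Sorting

def SignsSeparate (s : Fin 6 → Bool) (x y : Fin 6) : Prop :=
  s x = s y ∧ s 0 ≠ s x ∧ s 1 ≠ s x ∧ s 2 ≠ s x

instance (s : Fin 6 → Bool) (x y : Fin 6) : Decidable (SignsSeparate s x y) := by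
  unfold SignsSeparate; infer_instance

set_option maxRecDepth 10000 in
theorem exists_perm_signsSeparate (ε : Fin 6 → Bool)
    (hε : ∀ z, ∃ i j, galeSign ε z i = true ∧ galeSign ε j z = true) :
    ∃ τ : Equiv.Perm (Fin 6),
      SignsSeparate (fun i => galeSign ε (τ 5) (τ i)) 3 4 ∧
      ¬ SignsSeparate (fun i => galeSign ε (τ 3) (τ i)) 4 5 ∧
      ¬ SignsSeparate (fun i => galeSign ε (τ 4) (τ i)) 5 3 := by
  revert ε
  decide

def Separates (g : Fin 6 → ℝ) (x y : Fin 6) : Prop :=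
  0 < g x * g y ∧ g 0 * g x < 0 ∧ g 1 * g x < 0 ∧ g 2 * g x < 0

theorem separates_smul_iff {c : ℝ} (hc : c ≠ 0) {g : Fin 6 → ℝ} {x y : Fin 6} :
    Separates (c • g) x y ↔ Separates g x y := by
  have hc2 : 0 < c * c := mul_self_pos.2 hc
  simp only [Separates, Pi.smul_apply, smul_eq_mul, mul_mul_mul_comm c,
    mul_pos_iff_of_pos_left hc2, mul_neg_iff, hc2, hc2.not_gt, true_and, false_and, or_false]

theorem separates_iff_signsSeparate {g : Fin 6 → ℝ} {k x y : Fin 6}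
    (hg : ∀ i, i ≠ k → g i ≠ 0) (hk : 3 ≤ k) (hx : x ≠ k) (hy : y ≠ k) :
    Separates g x y ↔ SignsSeparate (fun i => decide (0 < g i)) x y := by
  have hgx := hg x hx
  rw [Separates, SignsSeparate, mul_pos_iff_decide_eq hgx (hg y hy),
    mul_neg_iff_decide_ne (hg 0 (by omega)) hgx, mul_neg_iff_decide_ne (hg 1 (by omega)) hgx,
    mul_neg_iff_decide_ne (hg 2 (by omega)) hgx]

/-- `ν 0 • q 0 + ν 1 • q 1 + ν 2 • q 2 = (-ν i) • q i + (-ν j) • q j` is a point of the open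
triangle `q 0 q 1 q 2` on the segment `[q i, q j]`. -/
structure IsCrossingDep (q : Fin 6 → V3) (i j k : Fin 6) (ν : Fin 6 → ℝ) : Prop where
  mem : ν ∈ affineDeps q
  apply_eq_zero : ν k = 0
  pos_zero : 0 < ν 0
  pos_one : 0 < ν 1
  pos_two : 0 < ν 2
  nonpos_left : ν i ≤ 0
  nonpos_right : ν j ≤ 0
  sum_eq_one : ν 0 + ν 1 + ν 2 = 1

section Crossing

variable {q : Fin 6 → V3} {i j k : Fin 6} {ν : Fin 6 → ℝ}

theorem exists_isCrossingDep (hi : 3 ≤ i) (hj : 3 ≤ j) (hk : 3 ≤ k) (hij : i ≠ j) (hki : k ≠ i)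
    (hkj : k ≠ j) {x : V3} (hx : x ∈ triRelint (q 0) (q 1) (q 2))
    (hx' : x ∈ segment ℝ (q i) (q j)) :
    ∃ ν, IsCrossingDep q i j k ν ∧ x = ν 0 • q 0 + ν 1 • q 1 + ν 2 • q 2 := by
  obtain ⟨α, β, γ, hα, hβ, hγ, hsum, rfl⟩ := hx
  obtain ⟨t, s, ht, hs, hts, hx'⟩ := hx'
  have : (0 : Fin 6) ≠ i ∧ (1 : Fin 6) ≠ i ∧ (2 : Fin 6) ≠ i ∧ (0 : Fin 6) ≠ j ∧ (1 : Fin 6) ≠ j ∧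
      (2 : Fin 6) ≠ j ∧ k ≠ 0 ∧ k ≠ 1 ∧ k ≠ 2 := by omega
  refine ⟨Pi.single 0 α + Pi.single 1 β + Pi.single 2 γ - Pi.single i t - Pi.single j s,
    ⟨?_, ?_, ?_, ?_, ?_, ?_, ?_, ?_⟩, ?_⟩
  · simp only [affineDeps, LinearMap.mem_ker, map_add, map_sub,
      Fintype.linearCombination_apply_single, Prod.smul_mk, smul_eq_mul, mul_one]
    refine Prod.ext ?_ ?_
    · simp only [Prod.fst_add, Prod.fst_sub, Prod.fst_zero]; linarith
    · simp only [Prod.snd_add, Prod.snd_sub, Prod.snd_zero, ← hx']; abel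
  all_goals simp [*]

theorem IsCrossingDep.mem_inter (hν : IsCrossingDep q 3 4 5 ν) :
    ν 0 • q 0 + ν 1 • q 1 + ν 2 • q 2 ∈ triRelint (q 0) (q 1) (q 2) ∩ segment ℝ (q 3) (q 4) := by
  obtain ⟨hsum, hcomb⟩ := mem_affineDeps.1 hν.mem
  simp only [Fin.sum_univ_six, hν.apply_eq_zero, zero_smul, add_zero] at hsum hcomb
  refine ⟨⟨ν 0, ν 1, ν 2, hν.pos_zero, hν.pos_one, hν.pos_two, hν.sum_eq_one, rfl⟩,
    -ν 3, -ν 4, neg_nonneg.2 hν.nonpos_left, neg_nonneg.2 hν.nonpos_right,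
    by linarith [hν.sum_eq_one], ?_⟩
  linear_combination (norm := module) -hcomb

theorem IsCrossingDep.eq {ν' : Fin 6 → ℝ} (hq : NoFourCoplanar q) (hν : IsCrossingDep q i j k ν)
    (hν' : IsCrossingDep q i j k ν') : ν' = ν := by
  have hk : (0 : Fin 6) ≠ k := fun h => hν.pos_zero.ne' (h ▸ hν.apply_eq_zero)
  have h := hq.eq_smul hν'.mem hν.mem hk hν'.apply_eq_zero hν.apply_eq_zero hν.pos_zero.ne'
  set c := ν' 0 / ν 0
  have hc : c = 1 := by
    have := hν'.sum_eq_one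
    simpa only [h, Pi.smul_apply, smul_eq_mul, ← mul_add, hν.sum_eq_one, mul_one] using this
  rw [h, hc, one_smul]

theorem IsCrossingDep.separates (hq : NoFourCoplanar q) (hν : IsCrossingDep q i j k ν)
    (hik : i ≠ k) (hjk : j ≠ k) {g : Fin 6 → ℝ} (hg : g ∈ affineDeps q) (hgk : g k = 0)
    (hg0 : ∀ m, m ≠ k → g m ≠ 0) : Separates g i j := by
  have hk : (0 : Fin 6) ≠ k := fun h => hν.pos_zero.ne' (h ▸ hν.apply_eq_zero)
  have hc : ν 0 / g 0 ≠ 0 := div_ne_zero hν.pos_zero.ne' (hg0 0 hk)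
  rw [← separates_smul_iff hc, ← hq.eq_smul hν.mem hg hk hν.apply_eq_zero hgk (hg0 0 hk)]
  have hν0 : ν ≠ 0 := fun h => hν.pos_zero.ne' (congrFun h 0)
  have hνi := hν.nonpos_left.lt_of_ne (hq.apply_ne_zero hν.mem hν0 hik hν.apply_eq_zero)
  have hνj := hν.nonpos_right.lt_of_ne (hq.apply_ne_zero hν.mem hν0 hjk hν.apply_eq_zero)
  exact ⟨mul_pos_of_neg_of_neg hνi hνj, mul_neg_of_pos_of_neg hν.pos_zero hνi,
    mul_neg_of_pos_of_neg hν.pos_one hνi, mul_neg_of_pos_of_neg hν.pos_two hνi⟩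

theorem IsCrossingDep.of_pos {μ : Fin 6 → ℝ} (hμ : μ ∈ affineDeps q) (hμk : μ k = 0)
    (h0 : 0 < μ 0) (h1 : 0 < μ 1) (h2 : 0 < μ 2) (hi : μ i ≤ 0) (hj : μ j ≤ 0) :
    IsCrossingDep q i j k ((μ 0 + μ 1 + μ 2)⁻¹ • μ) := by
  have hS : 0 < (μ 0 + μ 1 + μ 2)⁻¹ := inv_pos.2 (by linarith)
  refine ⟨Submodule.smul_mem _ _ hμ, by simp [hμk], ?_, ?_, ?_, ?_, ?_, ?_⟩
  all_goals simp only [Pi.smul_apply, smul_eq_mul]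
  · positivity
  · positivity
  · positivity
  · exact mul_nonpos_of_nonneg_of_nonpos hS.le hi
  · exact mul_nonpos_of_nonneg_of_nonpos hS.le hj
  · rw [← mul_add, ← mul_add, inv_mul_cancel₀ (by linarith)]

theorem exists_isCrossingDep_of_separates {g : Fin 6 → ℝ} (hg : g ∈ affineDeps q) (hgk : g k = 0)
    (h : Separates g i j) : ∃ ν, IsCrossingDep q i j k ν := by
  obtain ⟨hij, h0, h1, h2⟩ := h
  refine ⟨_, IsCrossingDep.of_pos (μ := (-g i) • g) (Submodule.smul_mem _ _ hg) (by simp [hgk])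
    ?_ ?_ ?_ ?_ ?_⟩
  all_goals simp only [Pi.smul_apply, smul_eq_mul]
  all_goals nlinarith [mul_self_nonneg (g i)]

end Crossing

theorem triRelint_inter_triBoundary_eq_singleton {q : Fin 6 → V3} (hq : NoFourCoplanar q)
    {g : Fin 6 → Fin 6 → ℝ} (hg : ∀ z, g z ∈ affineDeps q) (hgz : ∀ z, g z z = 0)
    (hg0 : ∀ z i, i ≠ z → g z i ≠ 0) (h5 : Separates (g 5) 3 4) (h3 : ¬ Separates (g 3) 4 5)
    (h4 : ¬ Separates (g 4) 5 3) :
    ∃ x, triRelint (q 0) (q 1) (q 2) ∩ triBoundary (q 3) (q 4) (q 5) = {x} := by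
  obtain ⟨ν, hν⟩ := exists_isCrossingDep_of_separates (hg 5) (hgz 5) h5
  obtain ⟨hx, hx'⟩ := hν.mem_inter
  refine ⟨_, eq_singleton_iff_unique_mem.2 ⟨⟨hx, Or.inl (Or.inl hx')⟩, ?_⟩⟩
  rintro y ⟨hy, (hy' | hy') | hy'⟩
  · obtain ⟨ν', hν', rfl⟩ := exists_isCrossingDep (k := 5) (by decide) (by decide) (by decide)
      (by decide) (by decide) (by decide) hy hy'
    rw [hν'.eq hq hν]
  · obtain ⟨ν', hν', -⟩ := exists_isCrossingDep (k := 3) (by decide) (by decide) (by decide)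
      (by decide) (by decide) (by decide) hy hy'
    exact absurd (hν'.separates hq (by decide) (by decide) (hg 3) (hgz 3) (hg0 3)) h3
  · obtain ⟨ν', hν', -⟩ := exists_isCrossingDep (k := 4) (by decide) (by decide) (by decide)
      (by decide) (by decide) (by decide) hy hy'
    exact absurd (hν'.separates hq (by decide) (by decide) (hg 4) (hgz 4) (hg0 4)) h4

/-- If no 4 of 6 points in `ℝ³` lie in a common affine plane, then the 6 points can be
partitioned into two triples such that the relative interior of the triangle spanned by the
first triple meets the boundary of the triangle spanned by the second triple in exactly
one point. -/
theorem stmt_0 (p : Fin 6 → V3)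
    (hgen : ∀ s : Finset (Fin 6), s.card = 4 → ¬ Coplanar ℝ (p '' ↑s)) :
    ∃ σ : Equiv.Perm (Fin 6), ∃ x : V3,
      triRelint (p (σ 0)) (p (σ 1)) (p (σ 2)) ∩
        triBoundary (p (σ 3)) (p (σ 4)) (p (σ 5)) = {x} := by
  have hp : NoFourCoplanar p := hgen
  have hdim : finrank ℝ V3 + 2 < Fintype.card (Fin 6) := by simp
  obtain ⟨u, hu, hu0, hu4⟩ := exists_mem_affineDeps_apply_eq_zero (q := p) hdim 4
  obtain ⟨v, hv, hv0, hv5⟩ := exists_mem_affineDeps_apply_eq_zero (q := p) hdim 5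
  have hne : ∀ z i, i ≠ z → galeDep u v z i ≠ 0 := fun _ _ =>
    hp.galeDep_apply_ne_zero hu hv hu0 hv0 (by decide) hu4 hv5
  obtain ⟨ρ, ε, hρ⟩ := exists_perm_decide_galeDep_pos hne
  obtain ⟨τ, h5, h3, h4⟩ := exists_perm_signsSeparate ε fun z => by
    obtain ⟨i, j, hi, hj⟩ := exists_galeDep_pos hu hv hne (ρ z)
    exact ⟨ρ.symm i, ρ.symm j, by simp [← hρ, hi], by simp [← hρ, hj]⟩
  let σ := τ.trans ρ
  let g z := galeDep u v (σ z) ∘ σ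
  have hg0 : ∀ z i, i ≠ z → g z i ≠ 0 := fun _ _ hiz => hne _ _ (σ.injective.ne hiz)
  have hsep : ∀ {z x y : Fin 6}, 3 ≤ z → x ≠ z → y ≠ z →
      (Separates (g z) x y ↔ SignsSeparate (fun i => galeSign ε (τ z) (τ i)) x y) :=
    fun hz hx hy => by simp only [separates_iff_signsSeparate (hg0 _) hz hx hy, g, σ, ← hρ]; rfl
  exact ⟨σ, triRelint_inter_triBoundary_eq_singleton (hp.comp_perm σ)
    (fun z => comp_mem_affineDeps σ (galeDep_mem hu hv _)) (fun z => galeDep_self u v _) hg0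
    ((hsep (by decide) (by decide) (by decide)).2 h5)
    (mt (hsep (by decide) (by decide) (by decide)).1 h3)
    (mt (hsep (by decide) (by decide) (by decide)).1 h4)⟩
end
end

section
/- Let K₁ and K₂ be disjoint knots in ℝ³ and let π : ℝ³ → ℝ², π(x,y,z) = (x,y). Assume the projection is generic for the pair: the set X of pairs (a,b) ∈ K₁ × K₂ with π(a) = π(b) is finite, and for every (a,b) ∈ X the point a lies in the relative interior of exactly one edge of K₁, b lies in the relative interior of exactly one edge of K₂, the π-images of these two edges are not parallel, and the z-coordinates of a and b differ. Then the number of pairs (a,b) ∈ X with z(a) > z(b) is congruent modulo 2 to the number of pairs (a,b) ∈ X with z(a) < z(b). -/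
open Set

noncomputable section

/-- Points of `ℝ²`. -/
abbrev V2 := Fin 2 → ℝ

/-- A knot: a closed non-self-intersecting polygonal curve in `ℝ³`, given by a cyclic
sequence of `m + 3` distinct vertices such that two edges intersect if and only if they are
cyclically consecutive, in which case they meet exactly in their common endpoint. -/
structure PolyKnot where
  m : ℕ
  v : Fin (m + 3) → V3
  inj : Function.Injective v
  simple : ∀ i j : Fin (m + 3), i ≠ j →
    segment ℝ (v i) (v (i + 1)) ∩ segment ℝ (v j) (v (j + 1)) =
      (if j = i + 1 then {v j} else if i = j + 1 then {v i} else (∅ : Set V3))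

/-- The union of the edges of a knot. -/
def PolyKnot.set (K : PolyKnot) : Set V3 :=
  ⋃ i, segment ℝ (K.v i) (K.v (i + 1))

/-- A subset of `ℝ³` which is a knot. -/
def IsKnot (S : Set V3) : Prop := ∃ K : PolyKnot, K.set = S

/-- The forward elementary move `ACB → AB`: the convex hull of `{A,B,C}` meets the knot
exactly in `[A,C] ∪ [C,B]`, and this part is replaced by the segment `[A,B]`. -/
def ElemMoveFwd (S S' : Set V3) : Prop :=
  ∃ A B C : V3,
    convexHull ℝ {A, B, C} ∩ S = segment ℝ A C ∪ segment ℝ C B ∧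
    S' = (S \ (segment ℝ A C ∪ segment ℝ C B)) ∪ segment ℝ A B

/-- An elementary move between two knots: either a forward move `ACB → AB`
or the inverse move `AB → ACB`. -/
def ElemMove (S S' : Set V3) : Prop :=
  IsKnot S ∧ IsKnot S' ∧ (ElemMoveFwd S S' ∨ ElemMoveFwd S' S)

/-- Two knots are isotopic if one is obtained from the other by a finite sequence of
elementary moves. -/
def Isotopic : Set V3 → Set V3 → Prop := Relation.ReflTransGen ElemMove

/-- Boundary of a nondegenerate triangle in `ℝ³`. -/
def IsTriangleBoundary (T : Set V3) : Prop :=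
  ∃ a b c : V3, ¬ Collinear ℝ ({a, b, c} : Set V3) ∧
    T = segment ℝ a b ∪ segment ℝ b c ∪ segment ℝ c a

/-- A knot is isotopic to the trivial knot (the boundary of a nondegenerate triangle). -/
def IsotopicToTrivial (S : Set V3) : Prop :=
  ∃ T : Set V3, IsTriangleBoundary T ∧ Isotopic S T

/-- The projection `ℝ³ → ℝ²`, `(x, y, z) ↦ (x, y)`. -/
def proj (x : V3) : V2 := ![x 0, x 1]

/-- The determinant of the 2×2 matrix with columns `u` and `w`. -/
def cross2 (u w : V2) : ℝ := u 0 * w 1 - u 1 * w 0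

/-- The relative interior of the `i`-th edge of a knot. -/
def PolyKnot.openEdge (K : PolyKnot) (i : Fin (K.m + 3)) : Set V3 :=
  openSegment ℝ (K.v i) (K.v (i + 1))

/-- The direction vector of the plane projection of the `i`-th edge of a knot. -/
def PolyKnot.projDir (K : PolyKnot) (i : Fin (K.m + 3)) : V2 :=
  proj (K.v (i + 1)) - proj (K.v i)

/-- The set of pairs `(a, b) ∈ K₁ × K₂` with `π a = π b`. -/
def crossingSet (K₁ K₂ : PolyKnot) : Set (V3 × V3) :=
  {q | q.1 ∈ K₁.set ∧ q.2 ∈ K₂.set ∧ proj q.1 = proj q.2}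

/-- The projection `π` is generic for the pair `(K₁, K₂)`: for every `(a, b)` in the
crossing set, `a` lies in the relative interior of exactly one edge of `K₁`, `b` lies
in the relative interior of exactly one edge of `K₂`, the plane projections of these
two edges are not parallel, and the `z`-coordinates of `a` and `b` differ. -/
def GenericProj (K₁ K₂ : PolyKnot) : Prop :=
  ∀ q ∈ crossingSet K₁ K₂,
    (∃! i, q.1 ∈ K₁.openEdge i) ∧ (∃! j, q.2 ∈ K₂.openEdge j) ∧
    (∀ i j, q.1 ∈ K₁.openEdge i → q.2 ∈ K₂.openEdge j →
      cross2 (K₁.projDir i) (K₂.projDir j) ≠ 0) ∧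
    q.1 2 ≠ q.2 2

namespace Stmt9


/-- Extension to the right. -/
lemma ext_right (a b : Fin 3 → ℝ) (t : ℝ) (ht0 : 0 ≤ t) (ht1 : t < 1)
    (h : ∀ j, 0 < a j + b j * t ∨ (a j + b j * t = 0 ∧ 0 < b j)) :
    ∃ s, t < s ∧ s ∈ Icc (0:ℝ) 1 ∧ ∀ j, 0 ≤ a j + b j * s := by
  set δ : Fin 3 → ℝ := fun j => if 0 ≤ b j then 1 else (a j + b j * t) / (-b j) with hδ
  have hδpos : ∀ j, 0 < δ j := by
    intro j
    by_cases hb : 0 ≤ b j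
    · simp [hδ, hb]
    · have hbneg : b j < 0 := lt_of_not_ge hb
      have hf : 0 < a j + b j * t := by
        rcases h j with h1 | ⟨_, h2⟩
        · exact h1
        · linarith
      simp only [hδ, if_neg hb]
      apply div_pos hf (by linarith)
  set ε : ℝ := min (1 - t) (min (δ 0) (min (δ 1) (δ 2))) with hε
  have hεpos : 0 < ε := by
    apply lt_min (by linarith)
    exact lt_min (hδpos 0) (lt_min (hδpos 1) (hδpos 2))
  have hεle : ∀ j, ε ≤ δ j := by
    intro j
    fin_cases j
    · exact le_trans (min_le_right _ _) (min_le_left _ _)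
    · exact le_trans (min_le_right _ _) (le_trans (min_le_right _ _) (min_le_left _ _))
    · exact le_trans (min_le_right _ _) (le_trans (min_le_right _ _) (min_le_right _ _))
  refine ⟨t + ε / 2, by linarith, ⟨by linarith, ?_⟩, ?_⟩
  · have : ε ≤ 1 - t := min_le_left _ _
    linarith
  · intro j
    have key : a j + b j * (t + ε / 2) = (a j + b j * t) + b j * (ε / 2) := by ring
    by_cases hb : 0 ≤ b j
    · have hf : 0 ≤ a j + b j * t := by
        rcases h j with h1 | ⟨h1, _⟩ <;> linarith
      nlinarith
    · have hbneg : b j < 0 := lt_of_not_ge hb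
      have hf : 0 < a j + b j * t := by
        rcases h j with h1 | ⟨_, h2⟩
        · exact h1
        · linarith
      have hδj : δ j = (a j + b j * t) / (-b j) := by simp [hδ, hb]
      have h1 : ε ≤ (a j + b j * t) / (-b j) := hδj ▸ hεle j
      have h2 : ε * (-b j) ≤ a j + b j * t := by
        rw [le_div_iff₀ (by linarith : (0:ℝ) < -b j)] at h1
        linarith
      nlinarith

lemma ext_left (a b : Fin 3 → ℝ) (t : ℝ) (ht0 : 0 < t) (ht1 : t ≤ 1)
    (h : ∀ j, 0 < a j + b j * t ∨ (a j + b j * t = 0 ∧ b j < 0)) :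
    ∃ s, s < t ∧ s ∈ Icc (0:ℝ) 1 ∧ ∀ j, 0 ≤ a j + b j * s := by
  obtain ⟨s, hs1, hs2, hs3⟩ := ext_right (fun j => a j + b j) (fun j => -b j) (1 - t)
    (by linarith) (by linarith) (by
      intro j
      have h0 : a j + b j + -b j * (1 - t) = a j + b j * t := by ring
      rcases h j with h1 | ⟨h1, h2⟩
      · left; rw [h0]; exact h1
      · right; rw [h0]; exact ⟨h1, show (0:ℝ) < -b j by linarith⟩)
  refine ⟨1 - s, by linarith, ⟨by linarith [hs2.2], by linarith [hs2.1]⟩, ?_⟩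
  intro j
  have := hs3 j
  have h0 : a j + b j + -b j * s = a j + b j * (1 - s) := by ring
  rw [h0] at this
  exact this

/-- The core 1D parity lemma: the number of boundary crossings of an interval-parametrized
segment with a region cut out by three affine inequalities has parity given by the endpoints. -/
lemma parity1D (a b : Fin 3 → ℝ)
    (hyp : ∀ t ∈ Icc (0:ℝ) 1, ∀ i, a i + b i * t = 0 → (∀ j, 0 ≤ a j + b j * t) →
      (0 < t ∧ t < 1 ∧ b i ≠ 0 ∧ ∀ j, j ≠ i → 0 < a j + b j * t)) :
    {t ∈ Icc (0:ℝ) 1 | (∃ i, a i + b i * t = 0) ∧ ∀ j, 0 ≤ a j + b j * t}.ncard % 2 =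
      ((if ∀ j, 0 ≤ a j then 1 else 0) + (if ∀ j, 0 ≤ a j + b j then 1 else 0)) % 2 := by
  classical
  set K := {t ∈ Icc (0:ℝ) 1 | (∃ i, a i + b i * t = 0) ∧ ∀ j, 0 ≤ a j + b j * t} with hK
  set S := {t ∈ Icc (0:ℝ) 1 | ∀ j, 0 ≤ a j + b j * t} with hS
  have hKS : K ⊆ S := fun t ht => ⟨ht.1, ht.2.2⟩
  have hSbdd : BddAbove S := BddAbove.mono (fun t ht => ht.1) (bddAbove_Icc)
  have hSbddb : BddBelow S := BddBelow.mono (fun t ht => ht.1) (bddBelow_Icc)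
  have hSclosed : IsClosed S := by
    have : S = Icc (0:ℝ) 1 ∩ ⋂ j, {t : ℝ | 0 ≤ a j + b j * t} := by
      ext t; simp [hS, mem_iInter]
    rw [this]
    exact isClosed_Icc.inter (isClosed_iInter fun j =>
      isClosed_le continuous_const (by continuity))
  -- unique vanishing index at a crossing
  have huniq : ∀ t ∈ K, ∃ i, a i + b i * t = 0 ∧ b i ≠ 0 ∧ 0 < t ∧ t < 1 ∧
      ∀ j, j ≠ i → 0 < a j + b j * t := by
    rintro t ⟨ht, ⟨i, hi⟩, hall⟩
    obtain ⟨h1, h2, h3, h4⟩ := hyp t ht i hi hall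
    exact ⟨i, hi, h3, h1, h2, h4⟩
  -- up-crossings t satisfy t ≤ s for all s ∈ S
  have hup : ∀ t ∈ K, ∀ i, a i + b i * t = 0 → 0 < b i → ∀ s ∈ S, t ≤ s := by
    rintro t ht i hi hb s hs
    by_contra hc
    push_neg at hc
    have := hs.2 i
    nlinarith
  have hdown : ∀ t ∈ K, ∀ i, a i + b i * t = 0 → b i < 0 → ∀ s ∈ S, s ≤ t := by
    rintro t ht i hi hb s hs
    by_contra hc
    push_neg at hc
    have := hs.2 i
    nlinarith
  -- sSup S and sInf S are crossings unless they are 0 / 1 in S respectively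
  have hsup : S.Nonempty → sSup S ∈ S := fun hne => hSclosed.csSup_mem hne hSbdd
  have hinf : S.Nonempty → sInf S ∈ S := fun hne => hSclosed.csInf_mem hne hSbddb
  have hsupK : S.Nonempty → ¬ (∀ j, 0 ≤ a j + b j) → sSup S ∈ K := by
    intro hne h1
    have hmem := hsup hne
    have hne1 : sSup S < 1 := by
      rcases lt_or_eq_of_le hmem.1.2 with h | h
      · exact h
      · exact absurd (h ▸ hmem).2 (by simpa using h1)
    by_contra hc
    have hvan : ∀ j, 0 < a j + b j * sSup S := by
      intro j
      rcases lt_or_eq_of_le (hmem.2 j) with h | h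
      · exact h
      · exact absurd ⟨hmem.1, ⟨j, h.symm⟩, hmem.2⟩ hc
    obtain ⟨s, hs1, hs2, hs3⟩ := ext_right a b (sSup S) hmem.1.1 hne1
      (fun j => Or.inl (hvan j))
    exact absurd (le_csSup hSbdd (⟨hs2, hs3⟩ : s ∈ S)) (by linarith)
  have hinfK : S.Nonempty → ¬ (∀ j, 0 ≤ a j) → sInf S ∈ K := by
    intro hne h0
    have hmem := hinf hne
    have hne0 : 0 < sInf S := by
      rcases lt_or_eq_of_le hmem.1.1 with h | h
      · exact h
      · exfalso; apply h0; intro j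
        have hj := hmem.2 j
        rw [← h] at hj
        simpa using hj
    by_contra hc
    have hvan : ∀ j, 0 < a j + b j * sInf S := by
      intro j
      rcases lt_or_eq_of_le (hmem.2 j) with h | h
      · exact h
      · exact absurd ⟨hmem.1, ⟨j, h.symm⟩, hmem.2⟩ hc
    obtain ⟨s, hs1, hs2, hs3⟩ := ext_left a b (sInf S) hne0 hmem.1.2
      (fun j => Or.inl (hvan j))
    exact absurd (csInf_le hSbddb (⟨hs2, hs3⟩ : s ∈ S)) (by linarith)
  -- every up-crossing equals sInf S, every down-crossing equals sSup S
  have hupEq : ∀ t ∈ K, ∀ i, a i + b i * t = 0 → 0 < b i → t = sInf S := by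
    intro t ht i hi hb
    have h1 : t ≤ sInf S := le_csInf ⟨t, hKS ht⟩ (hup t ht i hi hb)
    have h2 : sInf S ≤ t := csInf_le hSbddb (hKS ht)
    linarith
  have hdownEq : ∀ t ∈ K, ∀ i, a i + b i * t = 0 → b i < 0 → t = sSup S := by
    intro t ht i hi hb
    have h1 : sSup S ≤ t := csSup_le ⟨t, hKS ht⟩ (hdown t ht i hi hb)
    have h2 : t ≤ sSup S := le_csSup hSbdd (hKS ht)
    linarith
  by_cases h0 : ∀ j, 0 ≤ a j <;> by_cases h1 : ∀ j, 0 ≤ a j + b j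
  · -- both endpoints inside: no crossings
    have : K = ∅ := by
      ext t
      simp only [mem_empty_iff_false, iff_false]
      intro ht
      obtain ⟨i, hi, hb, ht0, ht1, _⟩ := huniq t ht
      rcases hb.lt_or_gt with hneg | hpos
      · have := hdown t ht i hi hneg 1 ⟨⟨by norm_num, le_refl 1⟩, by simpa using h1⟩
        linarith
      · have := hup t ht i hi hpos 0 ⟨⟨le_refl 0, by norm_num⟩, by simpa using h0⟩
        linarith
    rw [this]
    simp [h0, h1]
  · -- enters at 0, exits: one crossing
    have h0S : (0:ℝ) ∈ S := ⟨⟨le_refl 0, by norm_num⟩, by simpa using h0⟩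
    have hne : S.Nonempty := ⟨0, h0S⟩
    have hsupmem := hsupK hne h1
    have : K = {sSup S} := by
      ext t
      simp only [mem_singleton_iff]
      constructor
      · intro ht
        obtain ⟨i, hi, hb, ht0, ht1, _⟩ := huniq t ht
        rcases hb.lt_or_gt with hneg | hpos
        · exact hdownEq t ht i hi hneg
        · have := hup t ht i hi hpos 0 h0S
          linarith
      · rintro rfl; exact hsupmem
    rw [this]
    simp [h0, h1]
  · -- enters later, exits at 1: one crossing
    have h1S : (1:ℝ) ∈ S := ⟨⟨by norm_num, le_refl 1⟩, by
      intro j; have := h1 j; linarith [h1 j]⟩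
    have hne : S.Nonempty := ⟨1, h1S⟩
    have hinfmem := hinfK hne h0
    have : K = {sInf S} := by
      ext t
      simp only [mem_singleton_iff]
      constructor
      · intro ht
        obtain ⟨i, hi, hb, ht0, ht1, _⟩ := huniq t ht
        rcases hb.lt_or_gt with hneg | hpos
        · have := hdown t ht i hi hneg 1 h1S
          linarith
        · exact hupEq t ht i hi hpos
      · rintro rfl; exact hinfmem
    rw [this]
    simp [h0, h1]
  · -- both endpoints outside: zero or two crossings
    by_cases hne : S.Nonempty
    · have hsupmem := hsupK hne h1
      have hinfmem := hinfK hne h0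
      have hneq : sInf S ≠ sSup S := by
        intro heq
        obtain ⟨i, hi, hb, ht0, ht1, hothers⟩ := huniq _ hinfmem
        rcases hb.lt_or_gt with hneg | hpos
        · -- can extend left of sInf S: contradiction
          obtain ⟨s, hs1, hs2, hs3⟩ := ext_left a b (sInf S) ht0 (le_of_lt ht1) (by
            intro j
            by_cases hji : j = i
            · subst hji; exact Or.inr ⟨hi, hneg⟩
            · exact Or.inl (hothers j hji))
          exact absurd (csInf_le hSbddb (⟨hs2, hs3⟩ : s ∈ S)) (by linarith)
        · obtain ⟨s, hs1, hs2, hs3⟩ := ext_right a b (sInf S) (le_of_lt ht0) ht1 (by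
            intro j
            by_cases hji : j = i
            · subst hji; exact Or.inr ⟨hi, hpos⟩
            · exact Or.inl (hothers j hji))
          have : s ≤ sSup S := le_csSup hSbdd ⟨hs2, hs3⟩
          rw [← heq] at this
          linarith
      have : K = {sInf S, sSup S} := by
        ext t
        simp only [mem_insert_iff, mem_singleton_iff]
        constructor
        · intro ht
          obtain ⟨i, hi, hb, ht0, ht1, _⟩ := huniq t ht
          rcases hb.lt_or_gt with hneg | hpos
          · exact Or.inr (hdownEq t ht i hi hneg)
          · exact Or.inl (hupEq t ht i hi hpos)
        · rintro (rfl | rfl)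
          · exact hinfmem
          · exact hsupmem
      rw [this, Set.ncard_pair hneq]
      simp [h0, h1]
    · have : K = ∅ := by
        rw [← subset_empty_iff]
        intro t ht
        exact hne ⟨t, hKS ht⟩
      rw [this]
      simp [h0, h1]




/-- Affine functional vanishing on line `BC`, equal to `tdet A B C` at `A`. -/
def lf (B C y : V2) : ℝ := cross2 (C - B) (y - B)
/-- Twice the signed area of the triangle. -/
def tdet (A B C : V2) : ℝ := cross2 (C - B) (A - B)

lemma tdet_cyc (A B C : V2) : tdet A B C = tdet B C A := by
  simp only [tdet, cross2, Pi.sub_apply]; ring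

lemma lf_sum (A B C y : V2) : lf B C y + lf C A y + lf A B y = tdet A B C := by
  simp only [lf, tdet, cross2, Pi.sub_apply]; ring

lemma lf_vec (A B C y : V2) :
    lf B C y • A + lf C A y • B + lf A B y • C = tdet A B C • y := by
  funext s
  fin_cases s <;>
    simp only [Fin.isValue, Fin.mk_zero, Fin.mk_one, Pi.add_apply, Pi.smul_apply, smul_eq_mul,
      lf, tdet, cross2, Pi.sub_apply] <;>
    ring

lemma lf_affine (B C p d : V2) (t : ℝ) :
    lf B C (p + t • d) = lf B C p + t * cross2 (C - B) d := by
  simp only [lf, cross2, Pi.sub_apply, Pi.add_apply, Pi.smul_apply, smul_eq_mul]; ring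

lemma lf_param0 (A B C : V2) (t : ℝ) : lf B C (B + t • (C - B)) = 0 := by
  simp only [lf, cross2, Pi.sub_apply, Pi.add_apply, Pi.smul_apply, smul_eq_mul]; ring

lemma lf_param1 (A B C : V2) (t : ℝ) :
    lf C A (B + t • (C - B)) = (1 - t) * tdet A B C := by
  simp only [lf, tdet, cross2, Pi.sub_apply, Pi.add_apply, Pi.smul_apply, smul_eq_mul]; ring

lemma lf_param2 (A B C : V2) (t : ℝ) :
    lf A B (B + t • (C - B)) = t * tdet A B C := by
  simp only [lf, tdet, cross2, Pi.sub_apply, Pi.add_apply, Pi.smul_apply, smul_eq_mul]; ring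


lemma div_nonneg_of_mul (d x : ℝ) (hd : d ≠ 0) (h : 0 ≤ d * x) : 0 ≤ x / d := by
  have hx : x / d = (d * x) / d ^ 2 := by field_simp
  rw [hx]
  exact div_nonneg h (sq_nonneg d)

lemma div_pos_of_mul (d x : ℝ) (hd : d ≠ 0) (h : 0 < d * x) : 0 < x / d := by
  have hx : x / d = (d * x) / d ^ 2 := by field_simp
  rw [hx]
  exact div_pos h (by positivity)

/-- Characterization of the closed side `BC` by the affine functionals. -/
lemma side_char (A B C y : V2) (hΔ : tdet A B C ≠ 0) :
    y ∈ segment ℝ B C ↔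
      lf B C y = 0 ∧ 0 ≤ tdet A B C * lf C A y ∧ 0 ≤ tdet A B C * lf A B y := by
  constructor
  · intro hy
    rw [segment_eq_image'] at hy
    obtain ⟨t, ht, rfl⟩ := hy
    refine ⟨lf_param0 A B C t, ?_, ?_⟩
    · rw [lf_param1]; nlinarith [sq_nonneg (tdet A B C), ht.1, ht.2]
    · rw [lf_param2]; nlinarith [sq_nonneg (tdet A B C), ht.1, ht.2]
  · rintro ⟨h0, h1, h2⟩
    have hsum := lf_sum A B C y
    have hvec := lf_vec A B C y
    rw [h0] at hsum hvec
    simp only [zero_smul, zero_add] at hsum hvec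
    refine ⟨lf C A y / tdet A B C, lf A B y / tdet A B C, ?_, ?_, ?_, ?_⟩
    · exact div_nonneg_of_mul _ _ hΔ h1
    · exact div_nonneg_of_mul _ _ hΔ h2
    · field_simp; linarith
    · funext s
      have hv := congrFun hvec s
      simp only [Pi.add_apply, Pi.smul_apply, smul_eq_mul] at hv ⊢
      field_simp
      linarith [hv]

/-- Characterization of the open side `BC` by the affine functionals. -/
lemma side_char_open (A B C y : V2) (hΔ : tdet A B C ≠ 0) :
    y ∈ openSegment ℝ B C ↔
      lf B C y = 0 ∧ 0 < tdet A B C * lf C A y ∧ 0 < tdet A B C * lf A B y := by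
  constructor
  · intro hy
    rw [openSegment_eq_image'] at hy
    obtain ⟨t, ht, rfl⟩ := hy
    refine ⟨lf_param0 A B C t, ?_, ?_⟩
    · rw [lf_param1]
      nlinarith [sq_pos_of_ne_zero hΔ, ht.1, ht.2]
    · rw [lf_param2]
      nlinarith [sq_pos_of_ne_zero hΔ, ht.1, ht.2]
  · rintro ⟨h0, h1, h2⟩
    have hsum := lf_sum A B C y
    have hvec := lf_vec A B C y
    rw [h0] at hsum hvec
    simp only [zero_smul, zero_add] at hsum hvec
    refine ⟨lf C A y / tdet A B C, lf A B y / tdet A B C, ?_, ?_, ?_, ?_⟩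
    · exact div_pos_of_mul _ _ hΔ h1
    · exact div_pos_of_mul _ _ hΔ h2
    · field_simp; linarith
    · funext s
      have hv := congrFun hvec s
      simp only [Pi.add_apply, Pi.smul_apply, smul_eq_mul] at hv ⊢
      field_simp
      linarith [hv]


-- ### cross2 basics
lemma cross2_swap (u w : V2) : cross2 u w = -cross2 w u := by simp [cross2]; ring
lemma cross2_self (u : V2) : cross2 u u = 0 := by simp [cross2]; ring
lemma cross2_zero_left (w : V2) : cross2 0 w = 0 := by simp [cross2]
lemma cross2_smul_left (t : ℝ) (u w : V2) : cross2 (t • u) w = t * cross2 u w := by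
  simp [cross2, Pi.smul_apply, smul_eq_mul]; ring
lemma cross2_smul_right (t : ℝ) (u w : V2) : cross2 u (t • w) = t * cross2 u w := by
  simp [cross2, Pi.smul_apply, smul_eq_mul]; ring
lemma cross2_neg_left (u w : V2) : cross2 (-u) w = -cross2 u w := by
  simp [cross2]; ring

-- ### triangle vertex indexing
def tv (A B C : V2) : Fin 3 → V2 := ![A, B, C]
def G (A B C : V2) (s : Fin 3) (y : V2) : ℝ :=
  tdet A B C * lf (tv A B C (s + 1)) (tv A B C (s + 2)) y
def Gslope (A B C : V2) (s : Fin 3) (d : V2) : ℝ :=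
  tdet A B C * cross2 (tv A B C (s + 2) - tv A B C (s + 1)) d

lemma G_affine (A B C : V2) (s : Fin 3) (p d : V2) (t : ℝ) :
    G A B C s (p + t • d) = G A B C s p + Gslope A B C s d * t := by
  simp only [G, Gslope, lf_affine]; ring

lemma mul_eq_zero_iff' {d x : ℝ} (hd : d ≠ 0) : d * x = 0 ↔ x = 0 := by
  simp [hd]

lemma Gside_char (A B C : V2) (hΔ : tdet A B C ≠ 0) (s : Fin 3) (y : V2) :
    y ∈ segment ℝ (tv A B C (s + 1)) (tv A B C (s + 2)) ↔
      G A B C s y = 0 ∧ 0 ≤ G A B C (s + 1) y ∧ 0 ≤ G A B C (s + 2) y := by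
  have h1 : tdet B C A ≠ 0 := by rw [(tdet_cyc A B C).symm]; exact hΔ
  have h2 : tdet C A B ≠ 0 := by rw [tdet_cyc C A B]; exact hΔ
  have e1 : tdet B C A = tdet A B C := (tdet_cyc A B C).symm
  have e2 : tdet C A B = tdet A B C := tdet_cyc C A B
  fin_cases s
  · show y ∈ segment ℝ B C ↔
      tdet A B C * lf B C y = 0 ∧ 0 ≤ tdet A B C * lf C A y ∧ 0 ≤ tdet A B C * lf A B y
    rw [side_char A B C y hΔ, mul_eq_zero_iff' hΔ]
  · show y ∈ segment ℝ C A ↔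
      tdet A B C * lf C A y = 0 ∧ 0 ≤ tdet A B C * lf A B y ∧ 0 ≤ tdet A B C * lf B C y
    rw [side_char B C A y h1, mul_eq_zero_iff' hΔ, e1]
  · show y ∈ segment ℝ A B ↔
      tdet A B C * lf A B y = 0 ∧ 0 ≤ tdet A B C * lf B C y ∧ 0 ≤ tdet A B C * lf C A y
    rw [side_char C A B y h2, mul_eq_zero_iff' hΔ, e2]

lemma Gside_char_open (A B C : V2) (hΔ : tdet A B C ≠ 0) (s : Fin 3) (y : V2) :
    y ∈ openSegment ℝ (tv A B C (s + 1)) (tv A B C (s + 2)) ↔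
      G A B C s y = 0 ∧ 0 < G A B C (s + 1) y ∧ 0 < G A B C (s + 2) y := by
  have h1 : tdet B C A ≠ 0 := by rw [(tdet_cyc A B C).symm]; exact hΔ
  have h2 : tdet C A B ≠ 0 := by rw [tdet_cyc C A B]; exact hΔ
  have e1 : tdet B C A = tdet A B C := (tdet_cyc A B C).symm
  have e2 : tdet C A B = tdet A B C := tdet_cyc C A B
  fin_cases s
  · show y ∈ openSegment ℝ B C ↔
      tdet A B C * lf B C y = 0 ∧ 0 < tdet A B C * lf C A y ∧ 0 < tdet A B C * lf A B y
    rw [side_char_open A B C y hΔ, mul_eq_zero_iff' hΔ]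
  · show y ∈ openSegment ℝ C A ↔
      tdet A B C * lf C A y = 0 ∧ 0 < tdet A B C * lf A B y ∧ 0 < tdet A B C * lf B C y
    rw [side_char_open B C A y h1, mul_eq_zero_iff' hΔ, e1]
  · show y ∈ openSegment ℝ A B ↔
      tdet A B C * lf A B y = 0 ∧ 0 < tdet A B C * lf B C y ∧ 0 < tdet A B C * lf C A y
    rw [side_char_open C A B y h2, mul_eq_zero_iff' hΔ, e2]

lemma fin3_ne_cases {s s' : Fin 3} (h : s' ≠ s) : s' = s + 1 ∨ s' = s + 2 := by
  fin_cases s <;> fin_cases s' <;> simp_all <;> decide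

-- ### misc linear algebra
lemma smul_cancel {E : Type*} [AddCommGroup E] [Module ℝ E] {t t' : ℝ} {d : E}
    (hd : d ≠ 0) (h : t • d = t' • d) : t = t' := by
  have h2 : (t - t') • d = 0 := by rw [sub_smul, h, sub_self]
  rcases smul_eq_zero.mp h2 with h3 | h3
  · linarith [sub_eq_zero.mp (by exact_mod_cast h3)]
  · exact absurd h3 hd

lemma proj_comb (x d : V3) (t : ℝ) : proj (x + t • d) = proj x + t • proj d := by
  funext s
  fin_cases s <;>
    simp [proj, Pi.add_apply, Pi.smul_apply, smul_eq_mul]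

lemma proj_sub (x y : V3) : proj (x - y) = proj x - proj y := by
  funext s
  fin_cases s <;> simp [proj, Pi.sub_apply]

lemma proj_param (v w : V3) (t : ℝ) :
    proj (v + t • (w - v)) = proj v + t • (proj w - proj v) := by
  rw [proj_comb, proj_sub]

lemma mem_openSegment_of_segment {E : Type*} [AddCommGroup E] [Module ℝ E]
    {x y a : E} (ha : a ∈ segment ℝ x y) (h1 : a ≠ x) (h2 : a ≠ y) :
    a ∈ openSegment ℝ x y := by
  rw [← insert_endpoints_openSegment] at ha
  rcases ha with rfl | rfl | ha
  · exact absurd rfl h1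
  · exact absurd rfl h2
  · exact ha

lemma V2_ne_zero {d : V2} (hd : d ≠ 0) : d 0 ≠ 0 ∨ d 1 ≠ 0 := by
  by_contra h
  push_neg at h
  exact hd (by funext s; fin_cases s <;> simp [h.1, h.2])

/-- A point avoiding finitely many lines exists. -/
lemma exists_generic (s : Finset (V2 × V2)) :
    ∃ Z : V2, ∀ p ∈ s, p.2 ≠ 0 → cross2 p.2 (Z - p.1) ≠ 0 := by
  obtain ⟨M, hM⟩ := Finset.exists_le (s.image (fun p => p.1 0))
  set X0 : ℝ := M + 1 with hX0
  have hX0gt : ∀ p ∈ s, p.1 0 < X0 := by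
    intro p hp
    have := hM _ (Finset.mem_image_of_mem _ hp)
    linarith
  obtain ⟨N, hN⟩ := Finset.exists_le (s.image
    (fun p => p.1 1 + p.2 1 * (X0 - p.1 0) / p.2 0))
  set y : ℝ := N + 1 with hy
  refine ⟨![X0, y], ?_⟩
  intro p hp hd
  have hc : cross2 p.2 (![X0, y] - p.1) = p.2 0 * (y - p.1 1) - p.2 1 * (X0 - p.1 0) := by
    simp [cross2, Pi.sub_apply]
  rcases eq_or_ne (p.2 0) 0 with h0 | h0
  · have h1 : p.2 1 ≠ 0 := by
      rcases V2_ne_zero hd with h | h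
      · exact absurd h0 h
      · exact h
    rw [hc, h0]
    have := hX0gt p hp
    intro hcontra
    have : p.2 1 * (X0 - p.1 0) = 0 := by linarith
    rcases mul_eq_zero.mp this with h | h
    · exact h1 h
    · linarith
  · have hval : p.1 1 + p.2 1 * (X0 - p.1 0) / p.2 0 ≤ N :=
      hN _ (Finset.mem_image_of_mem _ hp)
    rw [hc]
    intro hcontra
    have : y = p.1 1 + p.2 1 * (X0 - p.1 0) / p.2 0 := by
      field_simp
      nlinarith [hcontra]
    rw [this] at hy
    linarith [hval, hy.ge]


-- ### knot basics
lemma fin_add_one_ne {n : ℕ} (i : Fin (n + 3)) : i + 1 ≠ i := by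
  intro h
  have h2 : (1 : Fin (n + 3)) = 0 := by
    have := congrArg (fun x => x - i) h
    simpa [add_comm, add_sub_cancel_right] using this
  have := congrArg Fin.val h2
  simp [Fin.val_one] at this

lemma vertex_ne (K : PolyKnot) (i : Fin (K.m + 3)) : K.v i ≠ K.v (i + 1) := by
  intro h
  exact fin_add_one_ne i (K.inj h.symm)

lemma edge_subset_set (K : PolyKnot) (i : Fin (K.m + 3)) :
    segment ℝ (K.v i) (K.v (i + 1)) ⊆ K.set :=
  subset_iUnion (fun i => segment ℝ (K.v i) (K.v (i + 1))) i

lemma openEdge_subset_set (K : PolyKnot) (i : Fin (K.m + 3)) :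
    K.openEdge i ⊆ K.set :=
  (openSegment_subset_segment ℝ _ _).trans (edge_subset_set K i)

lemma vertex_mem_set (K : PolyKnot) (i : Fin (K.m + 3)) : K.v i ∈ K.set :=
  edge_subset_set K i (left_mem_segment ℝ _ _)

lemma vertex_not_openEdge (K : PolyKnot) (k i : Fin (K.m + 3)) :
    K.v k ∉ K.openEdge i := by
  intro h
  by_cases hki : k = i
  · subst hki
    rw [PolyKnot.openEdge, left_mem_openSegment_iff] at h
    exact vertex_ne K k h
  by_cases hki1 : k = i + 1
  · subst hki1
    rw [PolyKnot.openEdge, right_mem_openSegment_iff] at h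
    exact vertex_ne K i h
  · have h1 : K.v k ∈ segment ℝ (K.v i) (K.v (i + 1)) :=
      openSegment_subset_segment ℝ _ _ h
    have h2 : K.v k ∈ segment ℝ (K.v k) (K.v (k + 1)) := left_mem_segment ℝ _ _
    have hik : i ≠ k := fun he => hki he.symm
    have hmem : K.v k ∈ (if k = i + 1 then {K.v k} else if i = k + 1 then {K.v i}
        else (∅ : Set V3)) := by
      rw [← K.simple i k hik]
      exact ⟨h1, h2⟩
    rw [if_neg hki1] at hmem
    by_cases hik1 : i = k + 1
    · rw [if_pos hik1] at hmem
      exact hki (K.inj (mem_singleton_iff.mp hmem))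
    · rw [if_neg hik1] at hmem
      exact hmem

lemma mem_openEdge_of_segment (K : PolyKnot) (i : Fin (K.m + 3)) {a : V3}
    (ha : a ∈ segment ℝ (K.v i) (K.v (i + 1))) (h1 : a ≠ K.v i) (h2 : a ≠ K.v (i + 1)) :
    a ∈ K.openEdge i :=
  mem_openSegment_of_segment ha h1 h2

/-- Vertices of `K₁` do not project onto the projection of `K₂`. -/
lemma proj_vertex_ne (K₁ K₂ : PolyKnot) (hgen : GenericProj K₁ K₂)
    (k : Fin (K₁.m + 3)) {b : V3} (hb : b ∈ K₂.set) : proj (K₁.v k) ≠ proj b := by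
  intro heq
  have hq : ((K₁.v k, b) : V3 × V3) ∈ crossingSet K₁ K₂ :=
    ⟨vertex_mem_set K₁ k, hb, heq⟩
  obtain ⟨⟨i, hi, _⟩, _⟩ := hgen _ hq
  exact vertex_not_openEdge K₁ k i hi

/-- Points of `K₁` do not project onto projections of vertices of `K₂`. -/
lemma proj_ne_vertex (K₁ K₂ : PolyKnot) (hgen : GenericProj K₁ K₂)
    (k : Fin (K₂.m + 3)) {a : V3} (ha : a ∈ K₁.set) : proj a ≠ proj (K₂.v k) := by
  intro heq
  have hq : ((a, K₂.v k) : V3 × V3) ∈ crossingSet K₁ K₂ :=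
    ⟨ha, vertex_mem_set K₂ k, heq⟩
  obtain ⟨_, ⟨j, hj, _⟩, _⟩ := hgen _ hq
  exact vertex_not_openEdge K₂ k j hj

/-- Segment points satisfy the collinearity equation. -/
lemma segment_collinear {X Y y' : V2} (h : y' ∈ segment ℝ X Y) :
    cross2 (y' - X) (Y - X) = 0 := by
  rw [segment_eq_image'] at h
  obtain ⟨r, _, rfl⟩ := h
  have : X + r • (Y - X) - X = r • (Y - X) := by abel
  rw [this, cross2_smul_left, cross2_self, mul_zero]

lemma segment_collinear' {X Y y' : V2} (h : y' ∈ segment ℝ X Y) :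
    cross2 (y' - Y) (X - Y) = 0 := by
  rw [segment_symm] at h
  exact segment_collinear h

/-- The main genericity verification: along the projected `i`-th edge of `K₁`, every
point of the boundary of the triangle `(Z, w j, w (j+1))` met within the triangle is a
transversal crossing of the relative interior of a unique side. -/
lemma hypMain (K₁ K₂ : PolyKnot) (hgen : GenericProj K₁ K₂) (Z : V2)
    (hZ1 : ∀ (j : Fin (K₂.m + 3)) (i : Fin (K₁.m + 3)),
      cross2 (proj (K₁.v i) - proj (K₂.v j)) (Z - proj (K₂.v j)) ≠ 0)
    (hZ3 : ∀ (i : Fin (K₁.m + 3)) (j : Fin (K₂.m + 3)), K₁.projDir i ≠ 0 →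
      cross2 (K₁.projDir i) (Z - proj (K₂.v j)) ≠ 0)
    (hZ4 : ∀ i : Fin (K₁.m + 3), K₁.projDir i ≠ 0 →
      cross2 (K₁.projDir i) (Z - proj (K₁.v i)) ≠ 0)
    (j : Fin (K₂.m + 3)) (hΔ : tdet Z (proj (K₂.v j)) (proj (K₂.v (j + 1))) ≠ 0)
    (i : Fin (K₁.m + 3)) :
    ∀ t ∈ Icc (0:ℝ) 1, ∀ s : Fin 3,
      G Z (proj (K₂.v j)) (proj (K₂.v (j + 1))) s
        (proj (K₁.v i) + t • (proj (K₁.v (i + 1)) - proj (K₁.v i))) = 0 →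
      (∀ s', 0 ≤ G Z (proj (K₂.v j)) (proj (K₂.v (j + 1))) s'
        (proj (K₁.v i) + t • (proj (K₁.v (i + 1)) - proj (K₁.v i)))) →
      (0 < t ∧ t < 1 ∧
        Gslope Z (proj (K₂.v j)) (proj (K₂.v (j + 1))) s
          (proj (K₁.v (i + 1)) - proj (K₁.v i)) ≠ 0 ∧
        ∀ s', s' ≠ s → 0 < G Z (proj (K₂.v j)) (proj (K₂.v (j + 1))) s'
          (proj (K₁.v i) + t • (proj (K₁.v (i + 1)) - proj (K₁.v i)))) := by
  set A := Z with hA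
  set B := proj (K₂.v j) with hB
  set C := proj (K₂.v (j + 1)) with hC
  set p := proj (K₁.v i) with hp
  set q := proj (K₁.v (i + 1)) with hq
  intro t ht s hvan hall
  set y := p + t • (q - p) with hy
  -- the 3D point over y on the edge of K₁
  set a3 := K₁.v i + t • (K₁.v (i + 1) - K₁.v i) with ha3
  have ha3seg : a3 ∈ segment ℝ (K₁.v i) (K₁.v (i + 1)) := by
    rw [segment_eq_image']
    exact ⟨t, ht, rfl⟩
  have ha3set : a3 ∈ K₁.set := edge_subset_set K₁ i ha3seg
  have hproj : proj a3 = y := proj_param _ _ _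
  have hseg : y ∈ segment ℝ (tv A B C (s + 1)) (tv A B C (s + 2)) :=
    (Gside_char A B C hΔ s y).mpr ⟨hvan, hall (s + 1), hall (s + 2)⟩
  -- y is never the apex Z
  have hyZ : y ≠ Z := by
    intro h
    by_cases hpd : K₁.projDir i = 0
    · have hqp : q - p = 0 := hpd
      have hyp' : y = p := by rw [hy, hqp, smul_zero, add_zero]
      exact hZ1 j i (by rw [show p - B = y - B by rw [hyp'],
        show Z - B = y - B by rw [h], cross2_self])
    · have hZp : Z - p = t • (q - p) := by rw [← h, hy]; abel
      apply hZ4 i hpd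
      have h1 : cross2 (K₁.projDir i) (Z - proj (K₁.v i)) = t * cross2 (q - p) (q - p) := by
        rw [show Z - proj (K₁.v i) = t • (q - p) from hZp, cross2_smul_right]
        rfl
      rw [h1, cross2_self, mul_zero]
  -- if the projected edge is degenerate, y = p
  have hdeg : K₁.projDir i = 0 → y = p := by
    intro hpd
    have hqp : q - p = 0 := hpd
    rw [hy, hqp, smul_zero, add_zero]
  -- y on the line of side [w j', Z] leads to a contradiction with hZ1 at t ∈ {0, 1} or deg
  have hwZ : ∀ j' : Fin (K₂.m + 3), p ∉ segment ℝ (proj (K₂.v j')) Z := by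
    intro j' hmem
    exact hZ1 j' i (segment_collinear hmem)
  have hwZ' : ∀ j' : Fin (K₂.m + 3), q ∉ segment ℝ (proj (K₂.v j')) Z := by
    intro j' hmem
    exact hZ1 j' (i + 1) (segment_collinear hmem)
  -- nondegeneracy of the projected edge when y lies on a side through Z
  have hstrict : ∀ j' : Fin (K₂.m + 3), y ∈ segment ℝ (proj (K₂.v j')) Z →
      (0 < t ∧ t < 1 ∧ K₁.projDir i ≠ 0) := by
    intro j' hmem
    have hpd : K₁.projDir i ≠ 0 := by
      intro hpd
      exact hwZ j' (hdeg hpd ▸ hmem)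
    have ht0 : t ≠ 0 := by
      intro h0
      apply hwZ j'
      have : y = p := by rw [hy, h0, zero_smul, add_zero]
      exact this ▸ hmem
    have ht1 : t ≠ 1 := by
      intro h1
      apply hwZ' j'
      have : y = q := by rw [hy, h1, one_smul]; abel
      exact this ▸ hmem
    exact ⟨lt_of_le_of_ne ht.1 (Ne.symm ht0), lt_of_le_of_ne ht.2 ht1, hpd⟩
  -- transversality with a side through Z
  have htrans : ∀ j' : Fin (K₂.m + 3), K₁.projDir i ≠ 0 →
      cross2 (Z - proj (K₂.v j')) (q - p) ≠ 0 := by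
    intro j' hpd hcon
    apply hZ3 i j' hpd
    have : cross2 (K₁.projDir i) (Z - proj (K₂.v j')) =
        -cross2 (Z - proj (K₂.v j')) (q - p) := by
      rw [cross2_swap]
      rfl
    rw [this, hcon, neg_zero]
  -- decompose the goal per side
  fin_cases s
  · -- side [B, C]: an honest crossing with the edge of K₂
    have hseg0 : y ∈ segment ℝ B C := hseg
    rw [segment_eq_image'] at hseg0
    obtain ⟨r, hr, hyr⟩ := hseg0
    set b3 := K₂.v j + r • (K₂.v (j + 1) - K₂.v j) with hb3
    have hb3seg : b3 ∈ segment ℝ (K₂.v j) (K₂.v (j + 1)) := by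
      rw [segment_eq_image']
      exact ⟨r, hr, rfl⟩
    have hb3set : b3 ∈ K₂.set := edge_subset_set K₂ j hb3seg
    have hprojb : proj b3 = y := by rw [proj_param, ← hyr]
    have hcrossq : ((a3, b3) : V3 × V3) ∈ crossingSet K₁ K₂ :=
      ⟨ha3set, hb3set, by rw [hproj, hprojb]⟩
    have ha3open : a3 ∈ K₁.openEdge i := by
      refine mem_openEdge_of_segment K₁ i ha3seg ?_ ?_
      · intro h
        exact proj_vertex_ne K₁ K₂ hgen i hb3set (by rw [← h, hproj, hprojb])
      · intro h
        exact proj_vertex_ne K₁ K₂ hgen (i + 1) hb3set (by rw [← h, hproj, hprojb])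
    have hb3open : b3 ∈ K₂.openEdge j := by
      refine mem_openEdge_of_segment K₂ j hb3seg ?_ ?_
      · intro h
        exact proj_ne_vertex K₁ K₂ hgen j ha3set (by rw [hproj, ← hprojb, h])
      · intro h
        exact proj_ne_vertex K₁ K₂ hgen (j + 1) ha3set (by rw [hproj, ← hprojb, h])
    obtain ⟨_, _, hcr, _⟩ := hgen _ hcrossq
    have hcr0 : cross2 (K₁.projDir i) (K₂.projDir j) ≠ 0 := hcr i j ha3open hb3open
    have hpd : K₁.projDir i ≠ 0 := by
      intro h
      exact hcr0 (by rw [h, cross2_zero_left])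
    -- t is in the open interval
    have hvne : K₁.v (i + 1) - K₁.v i ≠ 0 :=
      sub_ne_zero.mpr (Ne.symm (vertex_ne K₁ i))
    have htIoo : 0 < t ∧ t < 1 := by
      have := ha3open
      rw [PolyKnot.openEdge, openSegment_eq_image'] at this
      obtain ⟨t', ht', he⟩ := this
      have : t' = t := smul_cancel hvne (by
        have := he
        rw [ha3] at this
        exact add_left_cancel this.symm |>.symm)
      rw [← this]
      exact ⟨ht'.1, ht'.2⟩
    refine ⟨htIoo.1, htIoo.2, ?_, ?_⟩
    · -- transversality
      show tdet A B C * cross2 (tv A B C (0 + 2) - tv A B C (0 + 1)) (q - p) ≠ 0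
      have htv : tv A B C (0 + 2) - tv A B C (0 + 1) = C - B := rfl
      rw [htv]
      apply mul_ne_zero hΔ
      intro hcon
      apply hcr0
      have : cross2 (K₁.projDir i) (K₂.projDir j) = -cross2 (C - B) (q - p) := by
        rw [cross2_swap]
        rfl
      rw [this, hcon, neg_zero]
    · -- the other two functionals are positive
      have hyopen : y ∈ openSegment ℝ B C := by
        have := hb3open
        rw [PolyKnot.openEdge, openSegment_eq_image'] at this
        obtain ⟨r', hr', he⟩ := this
        rw [openSegment_eq_image']
        refine ⟨r', hr', ?_⟩
        rw [← hprojb, ← he, proj_param]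
      have hGpos := (Gside_char_open A B C hΔ 0 y).mp hyopen
      intro s' hs'
      rcases fin3_ne_cases hs' with h | h <;> rw [h]
      · exact hGpos.2.1
      · exact hGpos.2.2
  · -- side [C, A] = [w (j+1), Z]
    have hseg1 : y ∈ segment ℝ C A := hseg
    have hsegCZ : y ∈ segment ℝ (proj (K₂.v (j + 1))) Z := hseg1
    obtain ⟨ht0, ht1, hpd⟩ := hstrict (j + 1) hsegCZ
    refine ⟨ht0, ht1, ?_, ?_⟩
    · show tdet A B C * cross2 (tv A B C (1 + 2) - tv A B C (1 + 1)) (q - p) ≠ 0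
      have htv : tv A B C (1 + 2) - tv A B C (1 + 1) = A - C := rfl
      rw [htv]
      exact mul_ne_zero hΔ (htrans (j + 1) hpd)
    · have hyne1 : y ≠ C := by
        intro h
        exact proj_ne_vertex K₁ K₂ hgen (j + 1) ha3set (by rw [hproj, h])
      have hyne2 : y ≠ A := hyZ
      have hyopen : y ∈ openSegment ℝ C A :=
        mem_openSegment_of_segment hseg1 hyne1 hyne2
      have hGpos := (Gside_char_open A B C hΔ 1 y).mp hyopen
      intro s' hs'
      rcases fin3_ne_cases hs' with h | h <;> rw [h]
      · exact hGpos.2.1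
      · exact hGpos.2.2
  · -- side [A, B] = [Z, w j]
    have hseg2 : y ∈ segment ℝ A B := hseg
    have hsegBZ : y ∈ segment ℝ (proj (K₂.v j)) Z := by
      rw [segment_symm] at hseg2
      exact hseg2
    obtain ⟨ht0, ht1, hpd⟩ := hstrict j hsegBZ
    refine ⟨ht0, ht1, ?_, ?_⟩
    · show tdet A B C * cross2 (tv A B C (2 + 2) - tv A B C (2 + 1)) (q - p) ≠ 0
      have htv : tv A B C (2 + 2) - tv A B C (2 + 1) = B - A := rfl
      rw [htv]
      apply mul_ne_zero hΔ
      intro hcon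
      apply htrans j hpd
      have : cross2 (Z - B) (q - p) = -cross2 (B - A) (q - p) := by
        rw [show Z - B = -(B - A) by rw [hA]; abel, cross2_neg_left]
      rw [this, hcon, neg_zero]
    · have hyne1 : y ≠ B := by
        intro h
        exact proj_ne_vertex K₁ K₂ hgen j ha3set (by rw [hproj, h])
      have hyne2 : y ≠ A := hyZ
      have hyopen : y ∈ openSegment ℝ A B :=
        mem_openSegment_of_segment hseg2 hyne2 hyne1
      have hGpos := (Gside_char_open A B C hΔ 2 y).mp hyopen
      intro s' hs'
      rcases fin3_ne_cases hs' with h | h <;> rw [h]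
      · exact hGpos.2.1
      · exact hGpos.2.2

attribute [local instance] Classical.propDecidable

/-- `(i, j)` is a crossing pair of edges. -/
def inC (K₁ K₂ : PolyKnot) (i : Fin (K₁.m + 3)) (j : Fin (K₂.m + 3)) : Prop :=
  ∃ q ∈ crossingSet K₁ K₂, q.1 ∈ K₁.openEdge i ∧ q.2 ∈ K₂.openEdge j

/-- Number of crossings of the projected `i`-th edge of `K₁` with the segment `[c, Z]`. -/
def cnt (K₁ : PolyKnot) (Z : V2) (i : Fin (K₁.m + 3)) (c : V2) : ℕ :=
  {t ∈ Icc (0:ℝ) 1 |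
    proj (K₁.v i) + t • (proj (K₁.v (i + 1)) - proj (K₁.v i)) ∈ openSegment ℝ c Z}.ncard

/-- Indicator that the projected vertex `k` of `K₁` is inside the triangle. -/
def indT (K₁ : PolyKnot) (A B C : V2) (k : Fin (K₁.m + 3)) : ℕ :=
  if ∀ s, 0 ≤ G A B C s (proj (K₁.v k)) then 1 else 0

lemma key_i (K₁ K₂ : PolyKnot) (hgen : GenericProj K₁ K₂) (Z : V2)
    (hZ1 : ∀ (j : Fin (K₂.m + 3)) (i : Fin (K₁.m + 3)),
      cross2 (proj (K₁.v i) - proj (K₂.v j)) (Z - proj (K₂.v j)) ≠ 0)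
    (hZ3 : ∀ (i : Fin (K₁.m + 3)) (j : Fin (K₂.m + 3)), K₁.projDir i ≠ 0 →
      cross2 (K₁.projDir i) (Z - proj (K₂.v j)) ≠ 0)
    (hZ4 : ∀ i : Fin (K₁.m + 3), K₁.projDir i ≠ 0 →
      cross2 (K₁.projDir i) (Z - proj (K₁.v i)) ≠ 0)
    (j : Fin (K₂.m + 3)) (hΔ : tdet Z (proj (K₂.v j)) (proj (K₂.v (j + 1))) ≠ 0)
    (i : Fin (K₁.m + 3)) :
    ((if inC K₁ K₂ i j then 1 else 0) + cnt K₁ Z i (proj (K₂.v (j + 1)))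
        + cnt K₁ Z i (proj (K₂.v j))) % 2 =
      (indT K₁ Z (proj (K₂.v j)) (proj (K₂.v (j + 1))) i
        + indT K₁ Z (proj (K₂.v j)) (proj (K₂.v (j + 1))) (i + 1)) % 2 := by
  classical
  set A := Z with hA
  set B := proj (K₂.v j) with hB
  set C := proj (K₂.v (j + 1)) with hC
  set p := proj (K₁.v i) with hp
  set q := proj (K₁.v (i + 1)) with hq
  set a : Fin 3 → ℝ := fun s => G A B C s p with ha
  set b : Fin 3 → ℝ := fun s => Gslope A B C s (q - p) with hb
  have hab : ∀ (t : ℝ) (s : Fin 3), a s + b s * t = G A B C s (p + t • (q - p)) := by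
    intro t s
    rw [G_affine]
  have hM := hypMain K₁ K₂ hgen Z hZ1 hZ3 hZ4 j hΔ i
  have hyp : ∀ t ∈ Icc (0:ℝ) 1, ∀ s, a s + b s * t = 0 → (∀ s', 0 ≤ a s' + b s' * t) →
      (0 < t ∧ t < 1 ∧ b s ≠ 0 ∧ ∀ s', s' ≠ s → 0 < a s' + b s' * t) := by
    intro t ht s h1 h2
    rw [hab] at h1
    obtain ⟨c1, c2, c3, c4⟩ := hM t ht s h1 (fun s' => (hab t s') ▸ h2 s')
    refine ⟨c1, c2, c3, fun s' hs' => ?_⟩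
    rw [hab]
    exact c4 s' hs'
  have hpar := parity1D a b hyp
  -- the three open sides
  set SS : Fin 3 → Set ℝ := fun s => {t ∈ Icc (0:ℝ) 1 |
    p + t • (q - p) ∈ openSegment ℝ (tv A B C (s + 1)) (tv A B C (s + 2))} with hSS
  -- membership translations
  have hSSK : ∀ (s : Fin 3) (t : ℝ), t ∈ SS s →
      t ∈ Icc (0:ℝ) 1 ∧ (a s + b s * t = 0 ∧ ∀ s', s' ≠ s → 0 < a s' + b s' * t) := by
    intro s t hts
    obtain ⟨ht, hopen⟩ := hts
    obtain ⟨h1, h2, h3⟩ := (Gside_char_open A B C hΔ s _).mp hopen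
    refine ⟨ht, by rw [hab]; exact h1, ?_⟩
    intro s' hs'
    rw [hab]
    rcases fin3_ne_cases hs' with h | h <;> rw [h]
    · exact h2
    · exact h3
  have hSSall : ∀ (s : Fin 3) (t : ℝ), t ∈ SS s → ∀ s', 0 ≤ a s' + b s' * t := by
    intro s t hts s'
    obtain ⟨ht, h1, h2⟩ := hSSK s t hts
    by_cases hs' : s' = s
    · rw [hs', h1]
    · exact le_of_lt (h2 s' hs')
  have hKeq : {t ∈ Icc (0:ℝ) 1 | (∃ s, a s + b s * t = 0) ∧ ∀ s', 0 ≤ a s' + b s' * t} =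
      SS 0 ∪ SS 1 ∪ SS 2 := by
    ext t
    constructor
    · rintro ⟨ht, ⟨s, hs⟩, hall⟩
      obtain ⟨c1, c2, c3, c4⟩ := hyp t ht s hs hall
      have hopen : p + t • (q - p) ∈ openSegment ℝ (tv A B C (s + 1)) (tv A B C (s + 2)) := by
        refine (Gside_char_open A B C hΔ s _).mpr ⟨by rw [← hab]; exact hs, ?_, ?_⟩
        · rw [← hab]
          exact c4 (s + 1) (by
            intro h
            have := fin_add_one_ne (n := 0) s
            exact this h)
        · rw [← hab]
          refine c4 (s + 2) ?_
          fin_cases s <;> decide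
      have hts : t ∈ SS s := ⟨ht, hopen⟩
      fin_cases s
      · exact Or.inl (Or.inl hts)
      · exact Or.inl (Or.inr hts)
      · exact Or.inr hts
    · intro h
      have : ∃ s, t ∈ SS s := by
        rcases h with (h | h) | h
        exacts [⟨0, h⟩, ⟨1, h⟩, ⟨2, h⟩]
      obtain ⟨s, hts⟩ := this
      obtain ⟨ht, h1, _⟩ := hSSK s t hts
      exact ⟨ht, ⟨s, h1⟩, hSSall s t hts⟩
  have hdisj : ∀ s s' : Fin 3, s ≠ s' → Disjoint (SS s) (SS s') := by
    intro s s' hss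
    rw [Set.disjoint_left]
    intro t hts hts'
    obtain ⟨_, h1, _⟩ := hSSK s t hts
    obtain ⟨_, _, h2⟩ := hSSK s' t hts'
    exact absurd h1 (ne_of_gt (h2 s hss))
  have hsub : ∀ s : Fin 3, (SS s).Subsingleton := by
    intro s t hts t' hts'
    obtain ⟨ht, h1, _⟩ := hSSK s t hts
    obtain ⟨ht', h1', _⟩ := hSSK s t' hts'
    obtain ⟨_, _, hbs, _⟩ := hyp t ht s h1 (hSSall s t hts)
    have : b s * t = b s * t' := by linarith
    exact mul_left_cancel₀ hbs this
  have hfin : ∀ s : Fin 3, (SS s).Finite := fun s => (hsub s).finite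
  have hncard : {t ∈ Icc (0:ℝ) 1 |
      (∃ s, a s + b s * t = 0) ∧ ∀ s', 0 ≤ a s' + b s' * t}.ncard =
      (SS 0).ncard + (SS 1).ncard + (SS 2).ncard := by
    rw [hKeq]
    rw [Set.ncard_union_eq (by
        rw [Set.disjoint_union_left]
        exact ⟨hdisj 0 2 (by decide), hdisj 1 2 (by decide)⟩)
      ((hfin 0).union (hfin 1)) (hfin 2)]
    rw [Set.ncard_union_eq (hdisj 0 1 (by decide)) (hfin 0) (hfin 1)]
  -- identification of the three counts
  have hS1 : (SS 1).ncard = cnt K₁ Z i C := by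
    apply congrArg
    rfl
  have hS2 : (SS 2).ncard = cnt K₁ Z i B := by
    apply congrArg
    ext t
    simp only [hSS, mem_setOf_eq, mem_sep_iff]
    constructor
    · rintro ⟨h1, h2⟩
      refine ⟨h1, ?_⟩
      rw [openSegment_symm]
      exact h2
    · rintro ⟨h1, h2⟩
      refine ⟨h1, ?_⟩
      rw [show tv A B C (2 + 1) = A from rfl, show tv A B C (2 + 2) = B from rfl,
        openSegment_symm]
      exact h2
  have hS0 : (SS 0).ncard = if inC K₁ K₂ i j then 1 else 0 := by
    have hiff : inC K₁ K₂ i j ↔ (SS 0).Nonempty := by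
      constructor
      · rintro ⟨qq, hqq, hq1, hq2⟩
        rw [PolyKnot.openEdge, openSegment_eq_image'] at hq1 hq2
        obtain ⟨t, htIoo, he1⟩ := hq1
        obtain ⟨r, hrIoo, he2⟩ := hq2
        refine ⟨t, ⟨⟨le_of_lt htIoo.1, le_of_lt htIoo.2⟩, ?_⟩⟩
        have h1 : p + t • (q - p) = proj qq.1 := by rw [← he1, proj_param]
        have h2 : proj qq.2 = B + r • (C - B) := by rw [← he2, proj_param]
        rw [show tv A B C (0 + 1) = B from rfl, show tv A B C (0 + 2) = C from rfl,
          openSegment_eq_image']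
        exact ⟨r, hrIoo, by
          show B + r • (C - B) = p + t • (q - p)
          rw [← h2, ← hqq.2.2, ← h1]⟩
      · rintro ⟨t, hts⟩
        obtain ⟨ht, h1, _⟩ := hSSK 0 t hts
        obtain ⟨c1, c2, _, _⟩ := hyp t ht 0 h1 (hSSall 0 t hts)
        obtain ⟨_, hopen⟩ := hts
        rw [show tv A B C (0 + 1) = B from rfl, show tv A B C (0 + 2) = C from rfl,
          openSegment_eq_image'] at hopen
        obtain ⟨r, hrIoo, he⟩ := hopen
        refine ⟨(K₁.v i + t • (K₁.v (i + 1) - K₁.v i),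
          K₂.v j + r • (K₂.v (j + 1) - K₂.v j)), ⟨?_, ?_, ?_⟩, ?_, ?_⟩
        · exact openEdge_subset_set K₁ i (by
            rw [PolyKnot.openEdge, openSegment_eq_image']
            exact ⟨t, ⟨c1, c2⟩, rfl⟩)
        · exact openEdge_subset_set K₂ j (by
            rw [PolyKnot.openEdge, openSegment_eq_image']
            exact ⟨r, hrIoo, rfl⟩)
        · rw [proj_param, proj_param, ← he]
        · rw [PolyKnot.openEdge, openSegment_eq_image']
          exact ⟨t, ⟨c1, c2⟩, rfl⟩
        · rw [PolyKnot.openEdge, openSegment_eq_image']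
          exact ⟨r, hrIoo, rfl⟩
    by_cases hc : inC K₁ K₂ i j
    · rw [if_pos hc]
      obtain ⟨x, hx⟩ := hiff.mp hc
      rw [Set.ncard_eq_one]
      exact ⟨x, Set.eq_singleton_iff_unique_mem.mpr ⟨hx, fun y hy => hsub 0 hy hx⟩⟩
    · rw [if_neg hc]
      have : SS 0 = ∅ := by
        rw [← Set.not_nonempty_iff_eq_empty]
        exact fun h => hc (hiff.mpr h)
      rw [this, Set.ncard_empty]
  -- indicator identification
  have hind0 : (if ∀ s', 0 ≤ a s' then 1 else 0) = indT K₁ A B C i := rfl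
  have hind1 : (if ∀ s', 0 ≤ a s' + b s' then 1 else 0) = indT K₁ A B C (i + 1) := by
    have : (∀ s', 0 ≤ a s' + b s') ↔ (∀ s', 0 ≤ G A B C s' q) := by
      apply forall_congr'
      intro s'
      have : a s' + b s' = G A B C s' q := by
        have h1 : a s' + b s' * 1 = G A B C s' (p + (1:ℝ) • (q - p)) := hab 1 s'
        rw [mul_one] at h1
        rw [h1, one_smul, add_sub_cancel]
      rw [this]
    rw [if_congr this rfl rfl]
    rfl
  rw [hncard, hS0, hS1, hS2, hind0, hind1] at hpar
  calc ((if inC K₁ K₂ i j then 1 else 0) + cnt K₁ Z i C + cnt K₁ Z i B) % 2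
      = ((if inC K₁ K₂ i j then 1 else 0) + cnt K₁ Z i C + cnt K₁ Z i B) % 2 := rfl
    _ = (indT K₁ A B C i + indT K₁ A B C (i + 1)) % 2 := hpar

/-- Per `j` congruence: the number of crossing pairs on edge `j` of `K₂` is congruent to
the sum of the ray counts at its two endpoints. -/
lemma perj (K₁ K₂ : PolyKnot) (hgen : GenericProj K₁ K₂) (Z : V2)
    (hZ1 : ∀ (j : Fin (K₂.m + 3)) (i : Fin (K₁.m + 3)),
      cross2 (proj (K₁.v i) - proj (K₂.v j)) (Z - proj (K₂.v j)) ≠ 0)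
    (hZ2 : ∀ j : Fin (K₂.m + 3), K₂.projDir j ≠ 0 →
      cross2 (K₂.projDir j) (Z - proj (K₂.v j)) ≠ 0)
    (hZ3 : ∀ (i : Fin (K₁.m + 3)) (j : Fin (K₂.m + 3)), K₁.projDir i ≠ 0 →
      cross2 (K₁.projDir i) (Z - proj (K₂.v j)) ≠ 0)
    (hZ4 : ∀ i : Fin (K₁.m + 3), K₁.projDir i ≠ 0 →
      cross2 (K₁.projDir i) (Z - proj (K₁.v i)) ≠ 0)
    (j : Fin (K₂.m + 3)) :
    (((Finset.univ.filter fun i : Fin (K₁.m + 3) => inC K₁ K₂ i j).card : ZMod 2)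
      + (∑ i, cnt K₁ Z i (proj (K₂.v (j + 1))) : ℕ)
      + (∑ i, cnt K₁ Z i (proj (K₂.v j)) : ℕ)) = 0 := by
  by_cases hj : K₂.projDir j = 0
  · -- degenerate edge: no crossings and the two endpoints coincide
    have hw : proj (K₂.v (j + 1)) = proj (K₂.v j) := by
      have := sub_eq_zero.mp hj
      exact this
    have hfil : (Finset.univ.filter fun i : Fin (K₁.m + 3) => inC K₁ K₂ i j) = ∅ := by
      rw [Finset.filter_eq_empty_iff]
      rintro i - ⟨qq, hqq, hq1, hq2⟩
      obtain ⟨_, _, hcr, _⟩ := hgen _ hqq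
      apply hcr i j hq1 hq2
      rw [hj]
      simp [cross2]
    rw [hfil, hw]
    simp only [Finset.card_empty, Nat.cast_zero, zero_add]
    exact CharTwo.add_self_eq_zero _
  · -- nondegenerate edge: use the triangle
    have hΔ : tdet Z (proj (K₂.v j)) (proj (K₂.v (j + 1))) ≠ 0 := hZ2 j hj
    have hkey := key_i K₁ K₂ hgen Z hZ1 hZ3 hZ4 j hΔ
    have hcast : ∀ i : Fin (K₁.m + 3),
        (((if inC K₁ K₂ i j then 1 else 0) + cnt K₁ Z i (proj (K₂.v (j + 1)))
          + cnt K₁ Z i (proj (K₂.v j)) : ℕ) : ZMod 2) =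
        ((indT K₁ Z (proj (K₂.v j)) (proj (K₂.v (j + 1))) i
          + indT K₁ Z (proj (K₂.v j)) (proj (K₂.v (j + 1))) (i + 1) : ℕ) : ZMod 2) :=
      fun i => (ZMod.natCast_eq_natCast_iff _ _ _).mpr (hkey i)
    have hsum := Finset.sum_congr rfl (fun i (_ : i ∈ Finset.univ) => hcast i)
    have hL : ∑ i : Fin (K₁.m + 3),
        (((if inC K₁ K₂ i j then 1 else 0) + cnt K₁ Z i (proj (K₂.v (j + 1)))
          + cnt K₁ Z i (proj (K₂.v j)) : ℕ) : ZMod 2) =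
        ((Finset.univ.filter fun i : Fin (K₁.m + 3) => inC K₁ K₂ i j).card : ZMod 2)
          + (∑ i, cnt K₁ Z i (proj (K₂.v (j + 1))) : ℕ)
          + (∑ i, cnt K₁ Z i (proj (K₂.v j)) : ℕ) := by
      rw [Finset.card_filter]
      push_cast
      rw [Finset.sum_add_distrib, Finset.sum_add_distrib]
    have hR : ∑ i : Fin (K₁.m + 3),
        ((indT K₁ Z (proj (K₂.v j)) (proj (K₂.v (j + 1))) i
          + indT K₁ Z (proj (K₂.v j)) (proj (K₂.v (j + 1))) (i + 1) : ℕ) : ZMod 2) = 0 := by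
      push_cast
      rw [Finset.sum_add_distrib]
      have hre : ∑ i : Fin (K₁.m + 3),
          ((indT K₁ Z (proj (K₂.v j)) (proj (K₂.v (j + 1))) (i + 1) : ℕ) : ZMod 2) =
          ∑ i : Fin (K₁.m + 3),
          ((indT K₁ Z (proj (K₂.v j)) (proj (K₂.v (j + 1))) i : ℕ) : ZMod 2) :=
        Fintype.sum_equiv (Equiv.addRight 1) _ _ (fun x => rfl)
      rw [hre]
      exact CharTwo.add_self_eq_zero _
    rw [← hL, hsum, hR]

lemma cross2_zero_right (u : V2) : cross2 u 0 = 0 := by simp [cross2]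

/-- Map a crossing to its pair of edge indices. -/
def Fmap (K₁ K₂ : PolyKnot) (qq : V3 × V3) : Fin (K₁.m + 3) × Fin (K₂.m + 3) :=
  if h : ∃ pij : Fin (K₁.m + 3) × Fin (K₂.m + 3),
      qq.1 ∈ K₁.openEdge pij.1 ∧ qq.2 ∈ K₂.openEdge pij.2
  then h.choose else (⟨0, by omega⟩, ⟨0, by omega⟩)

lemma Fmap_spec (K₁ K₂ : PolyKnot) (hgen : GenericProj K₁ K₂) {qq : V3 × V3}
    (hqq : qq ∈ crossingSet K₁ K₂) :
    qq.1 ∈ K₁.openEdge (Fmap K₁ K₂ qq).1 ∧ qq.2 ∈ K₂.openEdge (Fmap K₁ K₂ qq).2 := by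
  obtain ⟨⟨i, hi, _⟩, ⟨j, hj, _⟩, _, _⟩ := hgen qq hqq
  have h : ∃ pij : Fin (K₁.m + 3) × Fin (K₂.m + 3),
      qq.1 ∈ K₁.openEdge pij.1 ∧ qq.2 ∈ K₂.openEdge pij.2 := ⟨(i, j), hi, hj⟩
  rw [Fmap, dif_pos h]
  exact h.choose_spec

lemma Fmap_eq (K₁ K₂ : PolyKnot) (hgen : GenericProj K₁ K₂) {qq : V3 × V3}
    (hqq : qq ∈ crossingSet K₁ K₂) {i : Fin (K₁.m + 3)} {j : Fin (K₂.m + 3)}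
    (hi : qq.1 ∈ K₁.openEdge i) (hj : qq.2 ∈ K₂.openEdge j) :
    Fmap K₁ K₂ qq = (i, j) := by
  obtain ⟨⟨i', hi', hiu⟩, ⟨j', hj', hju⟩, _, _⟩ := hgen qq hqq
  obtain ⟨h1, h2⟩ := Fmap_spec K₁ K₂ hgen hqq
  have e1 : (Fmap K₁ K₂ qq).1 = i' := hiu _ h1
  have e2 : i = i' := hiu _ hi
  have e3 : (Fmap K₁ K₂ qq).2 = j' := hju _ h2
  have e4 : j = j' := hju _ hj
  ext
  · rw [e1, ← e2]
  · rw [e3, ← e4]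

lemma Fmap_injOn (K₁ K₂ : PolyKnot) (hgen : GenericProj K₁ K₂) :
    InjOn (Fmap K₁ K₂) (crossingSet K₁ K₂) := by
  intro qq hqq qq' hqq' heq
  obtain ⟨h1, h2⟩ := Fmap_spec K₁ K₂ hgen hqq
  obtain ⟨h1', h2'⟩ := Fmap_spec K₁ K₂ hgen hqq'
  rw [heq] at h1 h2
  set i := (Fmap K₁ K₂ qq').1 with hi
  set j := (Fmap K₁ K₂ qq').2 with hj
  obtain ⟨_, _, hcr, _⟩ := hgen qq hqq
  have hc : cross2 (K₁.projDir i) (K₂.projDir j) ≠ 0 := hcr i j h1 h2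
  have hpd2 : K₂.projDir j ≠ 0 := by
    intro h
    exact hc (by rw [h, cross2_zero_right])
  -- parametrize all four points
  rw [PolyKnot.openEdge, openSegment_eq_image'] at h1 h2 h1' h2'
  obtain ⟨t, htI, het⟩ := h1
  obtain ⟨r, hrI, her⟩ := h2
  obtain ⟨t', htI', het'⟩ := h1'
  obtain ⟨r', hrI', her'⟩ := h2'
  have hproj1 : proj qq.1 = proj (K₁.v i) + t • K₁.projDir i := by
    rw [← het, proj_param]; rfl
  have hproj2 : proj qq.2 = proj (K₂.v j) + r • K₂.projDir j := by
    rw [← her, proj_param]; rfl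
  have hproj1' : proj qq'.1 = proj (K₁.v i) + t' • K₁.projDir i := by
    rw [← het', proj_param]; rfl
  have hproj2' : proj qq'.2 = proj (K₂.v j) + r' • K₂.projDir j := by
    rw [← her', proj_param]; rfl
  have e1 : proj (K₁.v i) + t • K₁.projDir i = proj (K₂.v j) + r • K₂.projDir j := by
    rw [← hproj1, ← hproj2]; exact hqq.2.2
  have e2 : proj (K₁.v i) + t' • K₁.projDir i = proj (K₂.v j) + r' • K₂.projDir j := by
    rw [← hproj1', ← hproj2']; exact hqq'.2.2
  have h3 : (t - t') • K₁.projDir i = (r - r') • K₂.projDir j := by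
    rw [sub_smul, sub_smul]
    calc t • K₁.projDir i - t' • K₁.projDir i
        = (proj (K₁.v i) + t • K₁.projDir i) - (proj (K₁.v i) + t' • K₁.projDir i) := by abel
      _ = (proj (K₂.v j) + r • K₂.projDir j) - (proj (K₂.v j) + r' • K₂.projDir j) := by
          rw [e1, e2]
      _ = r • K₂.projDir j - r' • K₂.projDir j := by abel
  have h4 : (t - t') * cross2 (K₁.projDir i) (K₂.projDir j) = 0 := by
    rw [← cross2_smul_left, h3, cross2_smul_left, cross2_self, mul_zero]
  have htt : t = t' := by
    rcases mul_eq_zero.mp h4 with h | h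
    · linarith [sub_eq_zero.mp h]
    · exact absurd h hc
  have hq1 : qq.1 = qq'.1 := by rw [← het, ← het', htt]
  have hq2 : qq.2 = qq'.2 := by
    have hpr : proj qq.2 = proj qq'.2 := by
      rw [← hqq.2.2, ← hqq'.2.2, hq1]
    rw [hproj2, hproj2'] at hpr
    have : r • K₂.projDir j = r' • K₂.projDir j := by
      have := hpr
      calc r • K₂.projDir j
          = (proj (K₂.v j) + r • K₂.projDir j) - proj (K₂.v j) := by abel
        _ = (proj (K₂.v j) + r' • K₂.projDir j) - proj (K₂.v j) := by rw [this]
        _ = r' • K₂.projDir j := by abel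
    have hrr : r = r' := smul_cancel hpd2 this
    rw [← her, ← her', hrr]
  exact Prod.ext hq1 hq2

lemma mem_image_Fmap (K₁ K₂ : PolyKnot) (hgen : GenericProj K₁ K₂)
    (i : Fin (K₁.m + 3)) (j : Fin (K₂.m + 3)) :
    (i, j) ∈ Fmap K₁ K₂ '' (crossingSet K₁ K₂) ↔ inC K₁ K₂ i j := by
  constructor
  · rintro ⟨qq, hqq, hF⟩
    obtain ⟨h1, h2⟩ := Fmap_spec K₁ K₂ hgen hqq
    rw [hF] at h1 h2
    exact ⟨qq, hqq, h1, h2⟩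
  · rintro ⟨qq, hqq, h1, h2⟩
    exact ⟨qq, hqq, Fmap_eq K₁ K₂ hgen hqq h1 h2⟩

end Stmt9

open Stmt9

/-- For two disjoint knots with generic plane projection, the number of crossings where
the first knot passes over the second is congruent mod 2 to the number of crossings where
it passes under. -/
theorem stmt_9 (K₁ K₂ : PolyKnot) (hdisj : Disjoint K₁.set K₂.set)
    (hfin : (crossingSet K₁ K₂).Finite) (hgen : GenericProj K₁ K₂) :
    {q ∈ crossingSet K₁ K₂ | q.2 2 < q.1 2}.ncard % 2 =
      {q ∈ crossingSet K₁ K₂ | q.1 2 < q.2 2}.ncard % 2 := by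
  classical
  -- choose a generic apex point Z
  obtain ⟨Z, hZ⟩ := exists_generic (
    (Finset.univ.image (fun ji : Fin (K₂.m + 3) × Fin (K₁.m + 3) =>
      (proj (K₂.v ji.1), proj (K₁.v ji.2) - proj (K₂.v ji.1)))) ∪
    (Finset.univ.image (fun j : Fin (K₂.m + 3) => (proj (K₂.v j), K₂.projDir j))) ∪
    (Finset.univ.image (fun ij : Fin (K₁.m + 3) × Fin (K₂.m + 3) =>
      (proj (K₂.v ij.2), K₁.projDir ij.1))) ∪
    (Finset.univ.image (fun i : Fin (K₁.m + 3) => (proj (K₁.v i), K₁.projDir i))))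
  have hZ1 : ∀ (j : Fin (K₂.m + 3)) (i : Fin (K₁.m + 3)),
      cross2 (proj (K₁.v i) - proj (K₂.v j)) (Z - proj (K₂.v j)) ≠ 0 := by
    intro j i
    refine hZ (proj (K₂.v j), proj (K₁.v i) - proj (K₂.v j)) ?_ ?_
    · apply Finset.mem_union_left
      apply Finset.mem_union_left
      apply Finset.mem_union_left
      exact Finset.mem_image_of_mem _ (Finset.mem_univ (j, i))
    · exact sub_ne_zero.mpr (proj_vertex_ne K₁ K₂ hgen i (vertex_mem_set K₂ j))
  have hZ2 : ∀ j : Fin (K₂.m + 3), K₂.projDir j ≠ 0 →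
      cross2 (K₂.projDir j) (Z - proj (K₂.v j)) ≠ 0 := by
    intro j hj
    refine hZ (proj (K₂.v j), K₂.projDir j) ?_ hj
    apply Finset.mem_union_left
    apply Finset.mem_union_left
    apply Finset.mem_union_right
    exact Finset.mem_image_of_mem _ (Finset.mem_univ j)
  have hZ3 : ∀ (i : Fin (K₁.m + 3)) (j : Fin (K₂.m + 3)), K₁.projDir i ≠ 0 →
      cross2 (K₁.projDir i) (Z - proj (K₂.v j)) ≠ 0 := by
    intro i j hpd
    refine hZ (proj (K₂.v j), K₁.projDir i) ?_ hpd
    apply Finset.mem_union_left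
    apply Finset.mem_union_right
    exact Finset.mem_image_of_mem _ (Finset.mem_univ (i, j))
  have hZ4 : ∀ i : Fin (K₁.m + 3), K₁.projDir i ≠ 0 →
      cross2 (K₁.projDir i) (Z - proj (K₁.v i)) ≠ 0 := by
    intro i hpd
    refine hZ (proj (K₁.v i), K₁.projDir i) ?_ hpd
    apply Finset.mem_union_right
    exact Finset.mem_image_of_mem _ (Finset.mem_univ i)
  -- the finite set of crossing pairs of edges
  set CF : Finset (Fin (K₁.m + 3) × Fin (K₂.m + 3)) :=
    Finset.univ.filter (fun pij => inC K₁ K₂ pij.1 pij.2) with hCF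
  have himg : Fmap K₁ K₂ '' crossingSet K₁ K₂ = ↑CF := by
    ext pij
    rw [hCF]
    simp only [Finset.coe_filter, Finset.mem_univ, true_and, mem_setOf_eq]
    rw [show pij = (pij.1, pij.2) from rfl]
    exact mem_image_Fmap K₁ K₂ hgen pij.1 pij.2
  have hXcard : (crossingSet K₁ K₂).ncard = CF.card := by
    rw [← Set.ncard_coe_finset, ← himg,
      Set.ncard_image_of_injOn (Fmap_injOn K₁ K₂ hgen)]
  have hfib : CF.card = ∑ j : Fin (K₂.m + 3),
      (Finset.univ.filter fun i => inC K₁ K₂ i j).card := by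
    rw [Finset.card_eq_sum_card_fiberwise
      (f := fun pij : Fin (K₁.m + 3) × Fin (K₂.m + 3) => pij.2)
      (t := Finset.univ) (fun x _ => Finset.mem_univ _)]
    apply Finset.sum_congr rfl
    intro j _
    refine Finset.card_bij' (fun p _ => p.1) (fun i _ => (i, j)) ?_ ?_ ?_ ?_
    · intro p hp
      simp only [hCF, Finset.mem_filter, Finset.mem_univ, true_and] at hp ⊢
      rw [← hp.2]
      exact hp.1
    · intro i hi
      simp only [hCF, Finset.mem_filter, Finset.mem_univ, true_and] at hi ⊢
      exact ⟨hi, trivial⟩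
    · intro p hp
      simp only [hCF, Finset.mem_filter, Finset.mem_univ, true_and] at hp
      exact Prod.ext rfl hp.2.symm
    · intro i hi
      rfl
  -- total parity is zero
  have hzero : (CF.card : ZMod 2) = 0 := by
    rw [hfib]
    push_cast
    have key : ∀ j : Fin (K₂.m + 3),
        (((Finset.univ.filter fun i => inC K₁ K₂ i j).card : ℕ) : ZMod 2) =
        ((∑ i, cnt K₁ Z i (proj (K₂.v (j + 1))) : ℕ) : ZMod 2)
          + ((∑ i, cnt K₁ Z i (proj (K₂.v j)) : ℕ) : ZMod 2) := by
      intro j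
      have h := perj K₁ K₂ hgen Z hZ1 hZ2 hZ3 hZ4 j
      set x : ZMod 2 := (((Finset.univ.filter fun i => inC K₁ K₂ i j).card : ℕ) : ZMod 2)
      set y : ZMod 2 := ((∑ i, cnt K₁ Z i (proj (K₂.v (j + 1))) : ℕ) : ZMod 2)
      set z : ZMod 2 := ((∑ i, cnt K₁ Z i (proj (K₂.v j)) : ℕ) : ZMod 2)
      have h2 : x + (y + z) = 0 := by rw [← add_assoc]; exact h
      calc x = x + 0 := (add_zero x).symm
        _ = x + ((y + z) + (y + z)) := by rw [CharTwo.add_self_eq_zero]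
        _ = (x + (y + z)) + (y + z) := by ring
        _ = y + z := by rw [h2, zero_add]
    rw [Finset.sum_congr rfl (fun j _ => key j), Finset.sum_add_distrib]
    have hre : ∑ j : Fin (K₂.m + 3), ((∑ i, cnt K₁ Z i (proj (K₂.v (j + 1))) : ℕ) : ZMod 2) =
        ∑ j : Fin (K₂.m + 3), ((∑ i, cnt K₁ Z i (proj (K₂.v j)) : ℕ) : ZMod 2) :=
      Fintype.sum_equiv (Equiv.addRight 1) _ _ (fun x => rfl)
    rw [hre]
    exact CharTwo.add_self_eq_zero _
  have hdvd : 2 ∣ CF.card := (ZMod.natCast_eq_zero_iff _ 2).mp hzero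
  -- split the crossing set by z-coordinates
  have hsplit : crossingSet K₁ K₂ =
      {q ∈ crossingSet K₁ K₂ | q.2 2 < q.1 2} ∪ {q ∈ crossingSet K₁ K₂ | q.1 2 < q.2 2} := by
    ext q
    constructor
    · intro hq
      obtain ⟨_, _, _, hne⟩ := hgen q hq
      rcases hne.lt_or_gt with h | h
      · exact Or.inr ⟨hq, h⟩
      · exact Or.inl ⟨hq, h⟩
    · rintro (⟨hq, _⟩ | ⟨hq, _⟩) <;> exact hq
  have hdisj2 : Disjoint {q ∈ crossingSet K₁ K₂ | q.2 2 < q.1 2}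
      {q ∈ crossingSet K₁ K₂ | q.1 2 < q.2 2} := by
    rw [Set.disjoint_left]
    rintro q ⟨_, h1⟩ ⟨_, h2⟩
    linarith
  have hcard2 : (crossingSet K₁ K₂).ncard =
      {q ∈ crossingSet K₁ K₂ | q.2 2 < q.1 2}.ncard
        + {q ∈ crossingSet K₁ K₂ | q.1 2 < q.2 2}.ncard := by
    conv_lhs => rw [hsplit]
    exact Set.ncard_union_eq hdisj2 (hfin.subset (sep_subset _ _)) (hfin.subset (sep_subset _ _))
  rw [hXcard] at hcard2
  omega
end
end
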